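/- arXiv:1505.02344 — 6 statements merged into one kernel-verified Lean document; each statement's English description precedes it below -/
import Mathlib

section
/- Suppose mn = 0 and nm = 0 for all m ∈ M and n ∈ N (G is a trivial generalized matrix algebra). Then G has the Lie derivation property provided the following two conditions hold: (I) [π_B(Z(G)) = Z(B) and M is a faithful left A-module] or [W_A = A and M is a faithful left A-module] or [A has the Lie derivation property and W_A = A]; (II) [π_A(Z(G)) = Z(A) and M is a faithful right B-module] or [W_B = B and M is a faithful right B-module] or [B has the Lie derivation property and W_B = B]. -/
/-- `x` lies in the Peirce corner `A = eGe`. -/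
def cA {G : Type*} [Ring G] (e x : G) : Prop := e * x * e = x

/-- `x` lies in the Peirce corner `B = fGf`, where `f = 1 - e`. -/
def cB {G : Type*} [Ring G] (e x : G) : Prop := (1 - e) * x * (1 - e) = x

/-- `x` lies in the Peirce corner `M = eGf`. -/
def cM {G : Type*} [Ring G] (e x : G) : Prop := e * x * (1 - e) = x

/-- `x` lies in the Peirce corner `N = fGe`. -/
def cN {G : Type*} [Ring G] (e x : G) : Prop := (1 - e) * x * e = x

/-- `z` lies in the center `Z(G)`. -/
def Ctr {G : Type*} [Ring G] (z : G) : Prop := ∀ x : G, z * x = x * z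

/-- `L` is a Lie derivation of `G` (with respect to the commutator `[x,y] = xy - yx`). -/
def IsLieDer {R : Type*} [CommRing R] {G : Type*} [Ring G] [Algebra R G]
    (L : G →ₗ[R] G) : Prop :=
  ∀ x y : G, L (x * y - y * x) = L x * y - y * L x + (x * L y - L y * x)

/-- `D` is a derivation of `G`. -/
def IsDer {R : Type*} [CommRing R] {G : Type*} [Ring G] [Algebra R G]
    (D : G →ₗ[R] G) : Prop :=
  ∀ x y : G, D (x * y) = D x * y + x * D y

/-- `L` is a proper Lie derivation: `L = D + τ` for a derivation `D` and a central-valued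
`τ` vanishing on all commutators. -/
def IsProper {R : Type*} [CommRing R] {G : Type*} [Ring G] [Algebra R G]
    (L : G →ₗ[R] G) : Prop :=
  ∃ D τ : G →ₗ[R] G, IsDer D ∧ (∀ x : G, Ctr (τ x)) ∧
    (∀ x y : G, τ (x * y - y * x) = 0) ∧ L = D + τ


/-- `M = eGf` is a faithful `(A,B)`-bimodule. -/
def FaithfulM {G : Type*} [Ring G] (e : G) : Prop :=
  (∀ a : G, cA e a → (∀ m : G, cM e m → a * m = 0) → a = 0) ∧
  (∀ b : G, cB e b → (∀ m : G, cM e m → m * b = 0) → b = 0)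

/-- `π_A(Z(G)) = Z(A)`. -/
def PiAeqZA {G : Type*} [Ring G] (e : G) : Prop :=
  ∀ a : G, (cA e a ∧ ∀ x : G, cA e x → a * x = x * a) ↔
    ∃ z : G, Ctr z ∧ a = e * z * e

/-- `π_B(Z(G)) = Z(B)`. -/
def PiBeqZB {G : Type*} [Ring G] (e : G) : Prop :=
  ∀ b : G, (cB e b ∧ ∀ x : G, cB e x → b * x = x * b) ↔
    ∃ z : G, Ctr z ∧ b = (1 - e) * z * (1 - e)

/-- `W_A = A`: the smallest `R`-subalgebra of `A = eGe` containing all commutators and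
all idempotents of `A` is `A` itself. -/
def WAeqA (R : Type*) {G : Type*} [CommRing R] [Ring G] [Algebra R G] (e : G) : Prop :=
  ∀ S : Set G, (∀ x ∈ S, cA e x) →
    (∀ x ∈ S, ∀ y ∈ S, x + y ∈ S) →
    (∀ (r : R), ∀ x ∈ S, r • x ∈ S) →
    (∀ x ∈ S, ∀ y ∈ S, x * y ∈ S) →
    (∀ a a' : G, cA e a → cA e a' → a * a' - a' * a ∈ S) →
    (∀ a : G, cA e a → a * a = a → a ∈ S) →
    ∀ a : G, cA e a → a ∈ S

/-- `W_B = B`: the smallest `R`-subalgebra of `B = fGf` containing all commutators and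
all idempotents of `B` is `B` itself. -/
def WBeqB (R : Type*) {G : Type*} [CommRing R] [Ring G] [Algebra R G] (e : G) : Prop :=
  ∀ S : Set G, (∀ x ∈ S, cB e x) →
    (∀ x ∈ S, ∀ y ∈ S, x + y ∈ S) →
    (∀ (r : R), ∀ x ∈ S, r • x ∈ S) →
    (∀ x ∈ S, ∀ y ∈ S, x * y ∈ S) →
    (∀ b b' : G, cB e b → cB e b' → b * b' - b' * b ∈ S) →
    (∀ b : G, cB e b → b * b = b → b ∈ S) →
    ∀ b : G, cB e b → b ∈ S

/-- The corner algebra `A = eGe` has the Lie derivation property: every `R`-linear Lie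
derivation of `A` is the sum of a derivation of `A` and a map into `Z(A)` vanishing on
all commutators of `A`. -/
def LDPcornerA (R : Type*) {G : Type*} [CommRing R] [Ring G] [Algebra R G] (e : G) : Prop :=
  ∀ δ : G →ₗ[R] G, (∀ a : G, cA e a → cA e (δ a)) →
    (∀ a a' : G, cA e a → cA e a' →
      δ (a * a' - a' * a) = δ a * a' - a' * δ a + (a * δ a' - δ a' * a)) →
    ∃ d t : G →ₗ[R] G,
      (∀ a : G, cA e a → cA e (d a)) ∧
      (∀ a a' : G, cA e a → cA e a' → d (a * a') = d a * a' + a * d a') ∧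
      (∀ a : G, cA e a → cA e (t a) ∧ ∀ x : G, cA e x → t a * x = x * t a) ∧
      (∀ a a' : G, cA e a → cA e a' → t (a * a' - a' * a) = 0) ∧
      (∀ a : G, cA e a → δ a = d a + t a)

/-- The corner algebra `B = fGf` has the Lie derivation property. -/
def LDPcornerB (R : Type*) {G : Type*} [CommRing R] [Ring G] [Algebra R G] (e : G) : Prop :=
  ∀ δ : G →ₗ[R] G, (∀ b : G, cB e b → cB e (δ b)) →
    (∀ b b' : G, cB e b → cB e b' →
      δ (b * b' - b' * b) = δ b * b' - b' * δ b + (b * δ b' - δ b' * b)) →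
    ∃ d t : G →ₗ[R] G,
      (∀ b : G, cB e b → cB e (d b)) ∧
      (∀ b b' : G, cB e b → cB e b' → d (b * b') = d b * b' + b * d b') ∧
      (∀ b : G, cB e b → cB e (t b) ∧ ∀ x : G, cB e x → t b * x = x * t b) ∧
      (∀ b b' : G, cB e b → cB e b' → t (b * b' - b' * b) = 0) ∧
      (∀ b : G, cB e b → δ b = d b + t b)

section Work

variable {R : Type*} [CommRing R] {G : Type*} [Ring G] [Algebra R G]

private lemma chn {G : Type*} [Ring G] {u v w : G} (h : u * v = w) (X : G) :
    u * (v * X) = w * X := by rw [← mul_assoc, h]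

private lemma assoc3 {G : Type*} [Ring G] {u v w z : G} (h : u * v * w = z) :
    u * (v * w) = z := by rw [← mul_assoc]; exact h

private lemma sand {G : Type*} [Ring G] (p X Y q : G) :
    p * (X * Y) * q = p * X * (Y * q) := by
  rw [mul_assoc p, mul_assoc X, ← mul_assoc p X]

private lemma sandCorn {G : Type*} [Ring G] {p q : G} (hp : p * p = p) (hq : q * q = q)
    (X : G) : p * (p * X * q) * q = p * X * q := by
  rw [sand, hq, ← mul_assoc, hp]

private lemma cornL {G : Type*} [Ring G] {p q a : G} (hp : p * p = p) (ha : p * a * q = a) :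
    p * a = a := by
  nth_rewrite 1 [← ha]
  rw [← mul_assoc, ← mul_assoc, hp]
  exact ha

private lemma cornR {G : Type*} [Ring G] {p q a : G} (hq : q * q = q) (ha : p * a * q = a) :
    a * q = a := by
  nth_rewrite 1 [← ha]
  rw [mul_assoc, hq]
  exact ha

private lemma cornL0 {G : Type*} [Ring G] {p q a p' : G} (h0 : p' * p = 0) (ha : p * a * q = a) :
    p' * a = 0 := by
  nth_rewrite 1 [← ha]
  rw [← mul_assoc, ← mul_assoc, h0, zero_mul, zero_mul]

private lemma cornR0 {G : Type*} [Ring G] {p q a q' : G} (h0 : q * q' = 0) (ha : p * a * q = a) :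
    a * q' = 0 := by
  nth_rewrite 1 [← ha]
  rw [mul_assoc, h0, mul_zero]

private lemma cornMul {G : Type*} [Ring G] {p q r a b : G} (hp : p * p = p) (hr : r * r = r)
    (ha : p * a * q = a) (hb : q * b * r = b) : p * (a * b) * r = a * b := by
  have h1 : p * (a * b) = a * b := by rw [← mul_assoc, cornL hp ha]
  rw [h1, mul_assoc, cornR hr hb]

private lemma cornMul0 {G : Type*} [Ring G] {p q q' r a b : G} (h0 : q * q' = 0)
    (ha : p * a * q = a) (hb : q' * b * r = b) : a * b = 0 := by
  have h1 : a * q' = 0 := cornR0 h0 ha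
  nth_rewrite 1 [← hb]
  rw [← mul_assoc, ← mul_assoc, h1, zero_mul, zero_mul]

private lemma absR {G : Type*} [Ring G] {a q Y : G} (ha : a * q = a) (hY : q * Y = 0) :
    a * Y = 0 := by rw [← ha, mul_assoc, hY, mul_zero]

private lemma absL {G : Type*} [Ring G] {p a Y : G} (ha : p * a = a) (hY : Y * p = 0) :
    Y * a = 0 := by rw [← ha, ← mul_assoc, hY, zero_mul]

structure Setup (R : Type*) (G : Type*) [CommRing R] [Ring G] [Algebra R G] where
  e : G
  f : G
  L : G →ₗ[R] G
  hef : e + f = 1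
  he : e * e = e
  hL : IsLieDer L
  hLef : e * L e * f = 0
  hLfe : f * L e * e = 0
  hM2 : ∀ x : G, e * x * f = x → x + x = 0 → x = 0
  hN2 : ∀ x : G, f * x * e = x → x + x = 0 → x = 0
  htriv : ∀ m n : G, e * m * f = m → f * n * e = n → m * n = 0 ∧ n * m = 0

namespace Setup

variable (S : Setup R G)

lemma hf1 : S.f = 1 - S.e := eq_sub_of_add_eq' S.hef

lemma hff : S.f * S.f = S.f := by
  rw [S.hf1]
  calc (1 - S.e) * (1 - S.e) = 1 - S.e - S.e + S.e * S.e := by noncomm_ring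
    _ = 1 - S.e := by rw [S.he]; abel

lemma hef0 : S.e * S.f = 0 := by
  rw [S.hf1]
  calc S.e * (1 - S.e) = S.e - S.e * S.e := by noncomm_ring
    _ = 0 := by rw [S.he, sub_self]

lemma hfe0 : S.f * S.e = 0 := by
  rw [S.hf1]
  calc (1 - S.e) * S.e = S.e - S.e * S.e := by noncomm_ring
    _ = 0 := by rw [S.he, sub_self]

lemma decomp (x : G) :
    S.e * x * S.e + S.e * x * S.f + (S.f * x * S.e + S.f * x * S.f) = x := by
  have h1 : S.e * x * S.e + S.e * x * S.f = S.e * x := by rw [← mul_add, S.hef, mul_one]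
  have h2 : S.f * x * S.e + S.f * x * S.f = S.f * x := by rw [← mul_add, S.hef, mul_one]
  rw [h1, h2, ← add_mul, S.hef, one_mul]

lemma lone : ∀ x : G, S.L 1 * x = x * S.L 1 := by
  intro x
  have h := S.hL x 1
  simp only [mul_one, one_mul, sub_self, map_zero] at h
  -- h : 0 = x * S.L 1 - S.L 1 * x  (after L x - L x cancels)
  rw [zero_add] at h
  exact (sub_eq_zero.mp h.symm).symm

lemma lone_fe : S.f * S.L 1 * S.e = 0 := by
  rw [← S.lone S.f, mul_assoc, S.hfe0, mul_zero]

lemma lone_ef : S.e * S.L 1 * S.f = 0 := by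
  rw [← S.lone S.e, mul_assoc, S.hef0, mul_zero]

def swap : Setup R G where
  e := S.f
  f := S.e
  L := S.L
  hef := by rw [add_comm]; exact S.hef
  he := S.hff
  hL := S.hL
  hLef := by
    have hf : S.L S.f = S.L 1 - S.L S.e := by rw [S.hf1, map_sub]
    rw [hf, mul_sub, sub_mul, S.lone_fe, S.hLfe, sub_zero]
  hLfe := by
    have hf : S.L S.f = S.L 1 - S.L S.e := by rw [S.hf1, map_sub]
    rw [hf, mul_sub, sub_mul, S.lone_ef, S.hLef, sub_zero]
  hM2 := S.hN2
  hN2 := S.hM2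
  htriv := fun m n hm hn => ⟨(S.htriv n m hn hm).2, (S.htriv n m hn hm).1⟩

variable {a a' m n b x : G}

/-- `L` preserves `M`. -/
lemma lMmem (hm : S.e * m * S.f = m) : S.e * S.L m * S.f = S.L m := by
  have h := S.hL S.e m
  rw [cornL S.he hm, cornR0 S.hfe0 hm, sub_zero] at h
  -- h : S.L m = S.L S.e * m - m * S.L S.e + (S.e * S.L m - S.L m * S.e)
  have hfe : S.f * S.L m * S.e = 0 := by
    have h2 := congrArg (fun t => S.f * t * S.e) h
    simp only [mul_sub, sub_mul, mul_add, add_mul, mul_assoc,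
      chn S.he, chn S.hff, chn S.hef0, chn S.hfe0, S.he, S.hff, S.hef0, S.hfe0,
      chn (cornL S.he hm), cornL S.he hm, chn (cornR S.hff hm), cornR S.hff hm,
      chn (cornR0 S.hfe0 hm), cornR0 S.hfe0 hm, chn (cornL0 S.hfe0 hm), cornL0 S.hfe0 hm,
      neg_mul, mul_neg, neg_neg, neg_zero, sub_self,
      zero_mul, mul_zero, sub_zero, zero_sub, add_zero, zero_add] at h2
    refine S.hN2 _ (sandCorn S.hff S.he (S.L m)) ?_
    linear_combination (norm := noncomm_ring) h2
  have hee : S.e * S.L m * S.e = 0 := by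
    have h2 := congrArg (fun t => S.e * t * S.e) h
    simp only [mul_sub, sub_mul, mul_add, add_mul, mul_assoc,
      chn S.he, chn S.hff, chn S.hef0, chn S.hfe0, S.he, S.hff, S.hef0, S.hfe0,
      chn (cornL S.he hm), cornL S.he hm, chn (cornR S.hff hm), cornR S.hff hm,
      chn (cornR0 S.hfe0 hm), cornR0 S.hfe0 hm, chn (cornL0 S.hfe0 hm), cornL0 S.hfe0 hm,
      absR (cornR S.hff hm) (assoc3 S.hLfe),
      neg_mul, mul_neg, neg_neg, neg_zero, sub_self,
      zero_mul, mul_zero, sub_zero, zero_sub, add_zero, zero_add] at h2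
    linear_combination (norm := noncomm_ring) h2
  have hffc : S.f * S.L m * S.f = 0 := by
    have h2 := congrArg (fun t => S.f * t * S.f) h
    simp only [mul_sub, sub_mul, mul_add, add_mul, mul_assoc,
      chn S.he, chn S.hff, chn S.hef0, chn S.hfe0, S.he, S.hff, S.hef0, S.hfe0,
      chn (cornL S.he hm), cornL S.he hm, chn (cornR S.hff hm), cornR S.hff hm,
      chn (cornR0 S.hfe0 hm), cornR0 S.hfe0 hm, chn (cornL0 S.hfe0 hm), cornL0 S.hfe0 hm,
      assoc3 (absL (cornL S.he hm) S.hLfe),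
      neg_mul, mul_neg, neg_neg, neg_zero, sub_self,
      zero_mul, mul_zero, sub_zero, zero_sub, add_zero, zero_add] at h2
    linear_combination (norm := noncomm_ring) h2
  have hd := S.decomp (S.L m)
  rw [hee, hfe, hffc, zero_add, add_zero, add_zero] at hd
  exact hd

/-- `L a` has no `M` component, for `a ∈ A`. -/
lemma lAef (ha : S.e * a * S.e = a) : S.e * S.L a * S.f = 0 := by
  have h := S.hL S.e a
  rw [cornL S.he ha, cornR S.he ha, sub_self, map_zero] at h
  have h2 := congrArg (fun t => S.e * t * S.f) h
  simp only [mul_sub, sub_mul, mul_add, add_mul, mul_assoc,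
    chn S.he, chn S.hff, chn S.hef0, chn S.hfe0, S.he, S.hff, S.hef0, S.hfe0,
    chn (cornL S.he ha), cornL S.he ha, chn (cornR S.he ha), cornR S.he ha,
    chn (cornR0 S.hef0 ha), cornR0 S.hef0 ha, chn (cornL0 S.hfe0 ha), cornL0 S.hfe0 ha,
    absR (cornR S.he ha) (assoc3 S.hLef),
    neg_mul, mul_neg, neg_neg, neg_zero, sub_self,
    zero_mul, mul_zero, sub_zero, zero_sub, add_zero, zero_add] at h2
  linear_combination (norm := noncomm_ring) -h2

/-- `L a` has no `N` component, for `a ∈ A`. -/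
lemma lAfe (ha : S.e * a * S.e = a) : S.f * S.L a * S.e = 0 := by
  have h := S.hL S.e a
  rw [cornL S.he ha, cornR S.he ha, sub_self, map_zero] at h
  have h2 := congrArg (fun t => S.f * t * S.e) h
  simp only [mul_sub, sub_mul, mul_add, add_mul, mul_assoc,
    chn S.he, chn S.hff, chn S.hef0, chn S.hfe0, S.he, S.hff, S.hef0, S.hfe0,
    chn (cornL S.he ha), cornL S.he ha, chn (cornR S.he ha), cornR S.he ha,
    chn (cornR0 S.hef0 ha), cornR0 S.hef0 ha, chn (cornL0 S.hfe0 ha), cornL0 S.hfe0 ha,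
    assoc3 (absL (cornL S.he ha) S.hLfe),
    neg_mul, mul_neg, neg_neg, neg_zero, sub_self,
    zero_mul, mul_zero, sub_zero, zero_sub, add_zero, zero_add] at h2
  linear_combination (norm := noncomm_ring) h2

lemma lAmem (ha : S.e * a * S.e = a) :
    S.e * S.L a * S.e + S.f * S.L a * S.f = S.L a := by
  have hd := S.decomp (S.L a)
  rw [S.lAef ha, S.lAfe ha, add_zero, zero_add] at hd
  exact hd

lemma cLa_e (ha : S.e * a * S.e = a) : S.L a * S.e = S.e * S.L a * S.e := by
  calc S.L a * S.e = (S.e + S.f) * (S.L a * S.e) := by rw [S.hef, one_mul]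
    _ = S.e * S.L a * S.e + S.f * S.L a * S.e := by
        rw [add_mul, ← mul_assoc, ← mul_assoc]
    _ = S.e * S.L a * S.e := by rw [S.lAfe ha, add_zero]

lemma ce_La (ha : S.e * a * S.e = a) : S.e * S.L a = S.e * S.L a * S.e := by
  calc S.e * S.L a = S.e * S.L a * (S.e + S.f) := by rw [S.hef, mul_one]
    _ = S.e * S.L a * S.e + S.e * S.L a * S.f := by rw [mul_add]
    _ = S.e * S.L a * S.e := by rw [S.lAef ha, add_zero]

lemma cLa_f (ha : S.e * a * S.e = a) : S.L a * S.f = S.f * S.L a * S.f := by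
  calc S.L a * S.f = (S.e + S.f) * (S.L a * S.f) := by rw [S.hef, one_mul]
    _ = S.e * S.L a * S.f + S.f * S.L a * S.f := by
        rw [add_mul, ← mul_assoc, ← mul_assoc]
    _ = S.f * S.L a * S.f := by rw [S.lAef ha, zero_add]

lemma cf_La (ha : S.e * a * S.e = a) : S.f * S.L a = S.f * S.L a * S.f := by
  calc S.f * S.L a = S.f * S.L a * (S.e + S.f) := by rw [S.hef, mul_one]
    _ = S.f * S.L a * S.e + S.f * S.L a * S.f := by rw [mul_add]
    _ = S.f * S.L a * S.f := by rw [S.lAfe ha, zero_add]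

/-- `phi` kills commutators of `A`. -/
lemma lcommf (ha : S.e * a * S.e = a) (ha' : S.e * a' * S.e = a') :
    S.f * S.L (a * a' - a' * a) * S.f = 0 := by
  have h := S.hL a a'
  have h2 := congrArg (fun t => S.f * t * S.f) h
  simp only [mul_sub, sub_mul, mul_add, add_mul, mul_assoc,
    chn S.he, chn S.hff, chn S.hef0, chn S.hfe0, S.he, S.hff, S.hef0, S.hfe0,
    chn (cornL S.he ha), cornL S.he ha, chn (cornR S.he ha), cornR S.he ha,
    chn (cornR0 S.hef0 ha), cornR0 S.hef0 ha, chn (cornL0 S.hfe0 ha), cornL0 S.hfe0 ha,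
    chn (cornL S.he ha'), cornL S.he ha', chn (cornR S.he ha'), cornR S.he ha',
    chn (cornR0 S.hef0 ha'), cornR0 S.hef0 ha', chn (cornL0 S.hfe0 ha'), cornL0 S.hfe0 ha',
    neg_mul, mul_neg, neg_neg, neg_zero, sub_self,
    zero_mul, mul_zero, sub_zero, zero_sub, add_zero, zero_add] at h2
  linear_combination (norm := noncomm_ring) h2

/-- The `A`-corner of `L` is a Lie derivation of `A`. -/
lemma lcomme (ha : S.e * a * S.e = a) (ha' : S.e * a' * S.e = a') :
    S.e * S.L (a * a' - a' * a) * S.e =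
      S.e * S.L a * S.e * a' - a' * (S.e * S.L a * S.e) +
        (a * (S.e * S.L a' * S.e) - S.e * S.L a' * S.e * a) := by
  have h := S.hL a a'
  have h2 := congrArg (fun t => S.e * t * S.e) h
  simp only [mul_sub, sub_mul, mul_add, add_mul, mul_assoc,
    chn S.he, chn S.hff, chn S.hef0, chn S.hfe0, S.he, S.hff, S.hef0, S.hfe0,
    chn (cornL S.he ha), cornL S.he ha, chn (cornR S.he ha), cornR S.he ha,
    chn (cornR0 S.hef0 ha), cornR0 S.hef0 ha, chn (cornL0 S.hfe0 ha), cornL0 S.hfe0 ha,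
    chn (cornL S.he ha'), cornL S.he ha', chn (cornR S.he ha'), cornR S.he ha',
    chn (cornR0 S.hef0 ha'), cornR0 S.hef0 ha', chn (cornL0 S.hfe0 ha'), cornL0 S.hfe0 ha',
    neg_mul, mul_neg, neg_neg, neg_zero, sub_self,
    zero_mul, mul_zero, sub_zero, zero_sub, add_zero, zero_add] at h2
  linear_combination (norm := noncomm_ring) h2 + (S.ce_La ha) * a' - a' * (S.cLa_e ha)
    + a * (S.cLa_e ha') - (S.ce_La ha') * a

/-- `phi a` is central in `B`. -/
lemma lZ (ha : S.e * a * S.e = a) (hb : S.f * b * S.f = b) :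
    S.f * S.L a * S.f * b = b * (S.f * S.L a * S.f) := by
  have h := S.hL a b
  rw [cornMul0 S.hef0 ha hb, cornMul0 S.hfe0 hb ha, sub_zero, map_zero] at h
  have h2 := congrArg (fun t => S.f * t * S.f) h
  simp only [mul_sub, sub_mul, mul_add, add_mul, mul_assoc,
    chn S.he, chn S.hff, chn S.hef0, chn S.hfe0, S.he, S.hff, S.hef0, S.hfe0,
    chn (cornL S.he ha), cornL S.he ha, chn (cornR S.he ha), cornR S.he ha,
    chn (cornR0 S.hef0 ha), cornR0 S.hef0 ha, chn (cornL0 S.hfe0 ha), cornL0 S.hfe0 ha,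
    chn (cornL S.hff hb), cornL S.hff hb, chn (cornR S.hff hb), cornR S.hff hb,
    chn (cornR0 S.hfe0 hb), cornR0 S.hfe0 hb, chn (cornL0 S.hef0 hb), cornL0 S.hef0 hb,
    neg_mul, mul_neg, neg_neg, neg_zero, sub_self,
    zero_mul, mul_zero, sub_zero, zero_sub, add_zero, zero_add] at h2
  linear_combination (norm := noncomm_ring) (S.f * S.L a) * (cornL S.hff hb) - h2 + b * (S.cLa_f ha)

/-- identity (i): `L(am) = delta(a) m + a L(m) - m phi(a)`. -/
lemma li (ha : S.e * a * S.e = a) (hm : S.e * m * S.f = m) :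
    S.L (a * m) = S.e * S.L a * S.e * m + a * S.L m - m * (S.f * S.L a * S.f) := by
  have h := S.hL a m
  rw [cornMul0 S.hfe0 hm ha, sub_zero] at h
  have hLma : S.L m * a = 0 := cornMul0 S.hfe0 (S.lMmem hm) ha
  linear_combination (norm := noncomm_ring) h - hLma
    - (S.L a) * (cornL S.he hm) + (S.cLa_e ha) * m
    + (cornR S.hff hm) * (S.L a) - m * (S.cf_La ha)

/-- identity (iii): `L(na) = L(n) a + n delta(a) - phi(a) n`. -/
lemma liii (ha : S.e * a * S.e = a) (hn : S.f * n * S.e = n) :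
    S.L (n * a) = S.L n * a + n * (S.e * S.L a * S.e) - S.f * S.L a * S.f * n := by
  have h := S.hL n a
  rw [cornMul0 S.hef0 ha hn, sub_zero] at h
  have hNmem : S.f * S.L n * S.e = S.L n := (S.swap).lMmem hn
  have haLn : a * S.L n = 0 := cornMul0 S.hef0 ha hNmem
  linear_combination (norm := noncomm_ring) h - haLn
    + n * (S.ce_La ha) - (cornR S.he hn) * (S.L a)
    - (S.cLa_f ha) * n + (S.L a) * (cornL S.hff hn)

/-- The key relation (**) between the defect of delta and phi, on M. -/
lemma l9 (ha : S.e * a * S.e = a) (ha' : S.e * a' * S.e = a') (hm : S.e * m * S.f = m) :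
    S.e * S.L (a * a') * S.e * m - m * (S.f * S.L (a * a') * S.f) =
      S.e * S.L a * S.e * (a' * m) + a * (S.e * S.L a' * S.e * m)
        - a * (m * (S.f * S.L a' * S.f)) - a' * m * (S.f * S.L a * S.f) := by
  have haa' : S.e * (a * a') * S.e = a * a' := cornMul S.he S.he ha ha'
  have hm' : S.e * (a' * m) * S.f = a' * m := cornMul S.he S.hff ha' hm
  have h1 := S.li haa' hm
  have h2 := S.li ha hm'
  have h3 := S.li ha' hm
  rw [show a * (a' * m) = a * a' * m from (mul_assoc a a' m).symm] at h2
  linear_combination (norm := noncomm_ring) h2 - h1 + a * h3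

/-- The key relation (***) between the defect of delta and phi, on N. -/
lemma l10 (ha : S.e * a * S.e = a) (ha' : S.e * a' * S.e = a') (hn : S.f * n * S.e = n) :
    n * (S.e * S.L (a * a') * S.e) - S.f * S.L (a * a') * S.f * n =
      n * (S.e * S.L a * S.e) * a' + n * a * (S.e * S.L a' * S.e)
        - S.f * S.L a * S.f * n * a' - S.f * S.L a' * S.f * (n * a) := by
  have haa' : S.e * (a * a') * S.e = a * a' := cornMul S.he S.he ha ha'
  have hn' : S.f * (n * a) * S.e = n * a := cornMul S.hff S.he hn ha
  have h1 := S.liii haa' hn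
  have h2 := S.liii ha' hn'
  have h3 := S.liii ha hn
  rw [show n * (a * a') = n * a * a' from (mul_assoc n a a').symm] at h1
  linear_combination (norm := noncomm_ring) h2 - h1 + h3 * a'

lemma eMulE (x y : G) :
    S.e * (x * y) * S.e =
      S.e * x * S.e * (S.e * y * S.e) + S.e * x * S.f * (S.f * y * S.e) := by
  linear_combination (norm := noncomm_ring) (-(S.e * x)) * S.hef * (y * S.e)
    - (S.e * x) * S.he * (y * S.e) - (S.e * x) * S.hff * (y * S.e)

lemma cornerComm (x y : G) :
    S.e * (x * y - y * x) * S.e =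
      (S.e * x * S.e) * (S.e * y * S.e) - (S.e * y * S.e) * (S.e * x * S.e) := by
  have h1 := S.eMulE x y
  have h2 := S.eMulE y x
  have z1 : S.e * x * S.f * (S.f * y * S.e) = 0 :=
    (S.htriv _ _ (sandCorn S.he S.hff x) (sandCorn S.hff S.he y)).1
  have z2 : S.e * y * S.f * (S.f * x * S.e) = 0 :=
    (S.htriv _ _ (sandCorn S.he S.hff y) (sandCorn S.hff S.he x)).1
  linear_combination (norm := noncomm_ring) h1 - h2 + z1 - z2

/-- `gamma` is a "mate" of `a`: the central completion data for `phi a`. -/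
def Mate (c γ : G) : Prop :=
  (S.e * γ * S.e = γ) ∧ (∀ x, S.e * x * S.e = x → γ * x = x * γ) ∧
  (∀ m, S.e * m * S.f = m → γ * m = m * (S.f * S.L c * S.f)) ∧
  (∀ n, S.f * n * S.e = n → S.f * S.L c * S.f * n = n * γ)

def Faith : Prop :=
  (∀ c, S.e * c * S.e = c → (∀ m, S.e * m * S.f = m → c * m = 0) → c = 0) ∨
  (∀ c, S.e * c * S.e = c → (∀ n, S.f * n * S.e = n → n * c = 0) → c = 0)

def WA (S : Setup R G) : Prop :=
  ∀ T : Set G, (∀ x ∈ T, S.e * x * S.e = x) →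
    (∀ x ∈ T, ∀ y ∈ T, x + y ∈ T) →
    (∀ (r : R), ∀ x ∈ T, r • x ∈ T) →
    (∀ x ∈ T, ∀ y ∈ T, x * y ∈ T) →
    (∀ a a' : G, S.e * a * S.e = a → S.e * a' * S.e = a' → a * a' - a' * a ∈ T) →
    (∀ a : G, S.e * a * S.e = a → a * a = a → a ∈ T) →
    ∀ a : G, S.e * a * S.e = a → a ∈ T

def LDPA (S : Setup R G) : Prop :=
  ∀ δ : G →ₗ[R] G, (∀ a : G, S.e * a * S.e = a → S.e * δ a * S.e = δ a) →
    (∀ a a' : G, S.e * a * S.e = a → S.e * a' * S.e = a' →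
      δ (a * a' - a' * a) = δ a * a' - a' * δ a + (a * δ a' - δ a' * a)) →
    ∃ d t : G →ₗ[R] G,
      (∀ a : G, S.e * a * S.e = a → S.e * d a * S.e = d a) ∧
      (∀ a a' : G, S.e * a * S.e = a → S.e * a' * S.e = a' → d (a * a') = d a * a' + a * d a') ∧
      (∀ a : G, S.e * a * S.e = a → (S.e * t a * S.e = t a ∧
        ∀ x : G, S.e * x * S.e = x → t a * x = x * t a)) ∧
      (∀ a a' : G, S.e * a * S.e = a → S.e * a' * S.e = a' → t (a * a' - a' * a) = 0) ∧
      (∀ a : G, S.e * a * S.e = a → δ a = d a + t a)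

lemma mate_unique (hF : S.Faith) {c γ₁ γ₂ : G} (h1 : S.Mate c γ₁) (h2 : S.Mate c γ₂) :
    γ₁ = γ₂ := by
  have hcor : S.e * (γ₁ - γ₂) * S.e = γ₁ - γ₂ := by
    rw [mul_sub, sub_mul, h1.1, h2.1]
  have h0 : γ₁ - γ₂ = 0 := by
    rcases hF with hF | hF
    · refine hF _ hcor fun m hm => ?_
      rw [sub_mul, h1.2.2.1 m hm, h2.2.2.1 m hm, sub_self]
    · refine hF _ hcor fun n hn => ?_
      rw [mul_sub, ← h1.2.2.2 n hn, ← h2.2.2.2 n hn, sub_self]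
  exact sub_eq_zero.mp h0

lemma mate_add {c c' γ γ' : G} (h : S.Mate c γ) (h' : S.Mate c' γ') :
    S.Mate (c + c') (γ + γ') := by
  refine ⟨by rw [mul_add, add_mul, h.1, h'.1], fun x hx => by
    rw [add_mul, mul_add, h.2.1 x hx, h'.2.1 x hx], fun m hm => ?_, fun n hn => ?_⟩
  · rw [add_mul, h.2.2.1 m hm, h'.2.2.1 m hm, map_add, mul_add, add_mul, mul_add]
  · rw [map_add, mul_add, add_mul, add_mul, h.2.2.2 n hn, h'.2.2.2 n hn, mul_add]

lemma mate_smul (r : R) {c γ : G} (h : S.Mate c γ) : S.Mate (r • c) (r • γ) := by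
  refine ⟨by rw [mul_smul_comm, smul_mul_assoc, h.1], fun x hx => by
    rw [smul_mul_assoc, mul_smul_comm, h.2.1 x hx], fun m hm => ?_, fun n hn => ?_⟩
  · rw [smul_mul_assoc, h.2.2.1 m hm, map_smul, mul_smul_comm, smul_mul_assoc, mul_smul_comm]
  · rw [map_smul, mul_smul_comm, smul_mul_assoc, smul_mul_assoc, h.2.2.2 n hn, mul_smul_comm]

lemma mate_comm (ha : S.e * a * S.e = a) (ha' : S.e * a' * S.e = a') :
    S.Mate (a * a' - a' * a) 0 := by
  refine ⟨by rw [mul_zero, zero_mul], fun x _ => by rw [zero_mul, mul_zero],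
    fun m hm => ?_, fun n hn => ?_⟩
  · rw [S.lcommf ha ha', mul_zero, zero_mul]
  · rw [S.lcommf ha ha', zero_mul, mul_zero]

lemma mate_central {γ : G} (ha : S.e * a * S.e = a) (h : S.Mate a γ) :
    ∀ x, (γ + S.f * S.L a * S.f) * x = x * (γ + S.f * S.L a * S.f) := by
  intro x
  have hφ : S.f * (S.f * S.L a * S.f) * S.f = S.f * S.L a * S.f := sandCorn S.hff S.hff _
  have hd := S.decomp x
  have ha'' : S.e * (S.e * x * S.e) * S.e = S.e * x * S.e := sandCorn S.he S.he x
  have hm'' : S.e * (S.e * x * S.f) * S.f = S.e * x * S.f := sandCorn S.he S.hff x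
  have hn'' : S.f * (S.f * x * S.e) * S.e = S.f * x * S.e := sandCorn S.hff S.he x
  have hb'' : S.f * (S.f * x * S.f) * S.f = S.f * x * S.f := sandCorn S.hff S.hff x
  have h1 := h.2.1 _ ha''
  have h2 := h.2.2.1 _ hm''
  have h3 : γ * (S.f * x * S.e) = 0 := cornMul0 S.hef0 h.1 hn''
  have h4 : γ * (S.f * x * S.f) = 0 := cornMul0 S.hef0 h.1 hb''
  have h5 : (S.f * S.L a * S.f) * (S.e * x * S.e) = 0 := cornMul0 S.hfe0 hφ ha''
  have h6 : (S.f * S.L a * S.f) * (S.e * x * S.f) = 0 := cornMul0 S.hfe0 hφ hm''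
  have h7 := h.2.2.2 _ hn''
  have h8 := S.lZ ha hb''
  have h9 : (S.e * x * S.e) * (S.f * S.L a * S.f) = 0 := cornMul0 S.hef0 ha'' hφ
  have h10 : (S.e * x * S.f) * γ = 0 := cornMul0 S.hfe0 hm'' h.1
  have h11 : (S.f * x * S.e) * (S.f * S.L a * S.f) = 0 := cornMul0 S.hef0 hn'' hφ
  have h12 : (S.f * x * S.f) * γ = 0 := cornMul0 S.hfe0 hb'' h.1
  linear_combination (norm := noncomm_ring)
    (-(γ + S.f * S.L a * S.f)) * hd + hd * (γ + S.f * S.L a * S.f)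
    + h1 + h2 + h3 + h4 + h5 + h6 + h7 + h8 - h9 - h10 - h11 - h12

lemma mate_mult (hF : S.Faith) {γA γA' γAA : G} (ha : S.e * a * S.e = a)
    (ha' : S.e * a' * S.e = a') (hA : S.Mate a γA) (hA' : S.Mate a' γA')
    (hAA : S.Mate (a * a') γAA) :
    S.e * S.L (a * a') * S.e - γAA =
      (S.e * S.L a * S.e - γA) * a' + a * (S.e * S.L a' * S.e - γA') := by
  have hXa : S.e * (S.e * S.L a * S.e - γA) * S.e = S.e * S.L a * S.e - γA := by
    rw [mul_sub, sub_mul, sandCorn S.he S.he _, hA.1]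
  have hYa : S.e * (S.e * S.L a' * S.e - γA') * S.e = S.e * S.L a' * S.e - γA' := by
    rw [mul_sub, sub_mul, sandCorn S.he S.he _, hA'.1]
  have k1 : S.e * (S.e * S.L (a * a') * S.e) * S.e = S.e * S.L (a * a') * S.e :=
    sandCorn S.he S.he _
  have kC := cornMul S.he S.he hXa ha'
  have kD := cornMul S.he S.he ha hYa
  have hE : S.e * S.L (a * a') * S.e - γAA -
      ((S.e * S.L a * S.e - γA) * a' + a * (S.e * S.L a' * S.e - γA')) = 0 := by
    rcases hF with hF | hF
    · refine hF _ ?_ fun m hm => ?_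
      · linear_combination (norm := noncomm_ring) k1 - hAA.1 - kC - kD
      · have hm'' := cornMul S.he S.hff ha' hm
        have q1 := S.l9 ha ha' hm
        have q2 := hAA.2.2.1 m hm
        have q3 := hA.2.2.1 _ hm''
        have q4 := hA'.2.2.1 m hm
        linear_combination (norm := noncomm_ring) q1 - q2 + q3 + a * q4
    · refine hF _ ?_ fun n hn => ?_
      · linear_combination (norm := noncomm_ring) k1 - hAA.1 - kC - kD
      · have hn'' := cornMul S.hff S.he hn ha
        have q1 := S.l10 ha ha' hn
        have q2 := hAA.2.2.2 n hn
        have q3 := hA.2.2.2 n hn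
        have q4 := hA'.2.2.2 _ hn''
        linear_combination (norm := noncomm_ring) q1 + q2 - q3 * a' - q4
  linear_combination (norm := noncomm_ring) hE

lemma mate_of_conds (hF : S.Faith) (ha : S.e * a * S.e = a) {γ : G}
    (hcor : S.e * γ * S.e = γ)
    (hM : ∀ m, S.e * m * S.f = m → γ * m = m * (S.f * S.L a * S.f))
    (hN : ∀ n, S.f * n * S.e = n → S.f * S.L a * S.f * n = n * γ) : S.Mate a γ := by
  refine ⟨hcor, fun x hx => ?_, hM, hN⟩
  have hsub : S.e * (γ * x - x * γ) * S.e = γ * x - x * γ := by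
    rw [mul_sub, sub_mul, cornMul S.he S.he hcor hx, cornMul S.he S.he hx hcor]
  have h0 : γ * x - x * γ = 0 := by
    rcases hF with hF | hF
    · refine hF _ hsub fun m hm => ?_
      have q1 := hM _ (cornMul S.he S.hff hx hm)
      have q2 := hM m hm
      linear_combination (norm := noncomm_ring) q1 - x * q2
    · refine hF _ hsub fun n hn => ?_
      have q1 := hN _ (cornMul S.hff S.he hn hx)
      have q2 := hN n hn
      linear_combination (norm := noncomm_ring) q1 - q2 * x
  linear_combination (norm := noncomm_ring) h0

lemma mate_exists_pi
    (hπ : ∀ b, (S.f * b * S.f = b ∧ ∀ x, S.f * x * S.f = x → b * x = x * b) ↔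
      ∃ z, (∀ x, z * x = x * z) ∧ b = S.f * z * S.f)
    (ha : S.e * a * S.e = a) : ∃ γ, S.Mate a γ := by
  obtain ⟨z, hz, hzeq⟩ := (hπ (S.f * S.L a * S.f)).mp
    ⟨sandCorn S.hff S.hff _, fun x hx => S.lZ ha hx⟩
  refine ⟨S.e * z * S.e, sandCorn S.he S.he z, fun x hx => ?_, fun m hm => ?_, fun n hn => ?_⟩
  · linear_combination (norm := noncomm_ring)
      S.e * (hz S.e) * x + S.he * (z * x) + S.e * (hz x) + (cornL S.he hx) * z
      - (cornR S.he hx) * (z * S.e) - x * (hz S.e) - (cornR S.he hx) * z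
  · rw [hzeq]
    linear_combination (norm := noncomm_ring)
      S.e * (hz S.e) * m + S.he * (z * m) + S.e * (hz m) + (cornL S.he hm) * z
      - (cornR S.hff hm) * (z * S.f) - m * (hz S.f) - (cornR S.hff hm) * z
  · rw [hzeq]
    linear_combination (norm := noncomm_ring)
      S.f * (hz S.f) * n + S.hff * (z * n) + S.f * (hz n) + (cornL S.hff hn) * z
      - (cornR S.he hn) * (z * S.e) - n * (hz S.e) - (cornR S.he hn) * z

lemma mate_exists_W (hW : S.WA) (ha : S.e * a * S.e = a) :
    ∃ γ, S.e * γ * S.e = γ ∧ (∀ m, S.e * m * S.f = m → γ * m = m * (S.f * S.L a * S.f)) ∧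
      (∀ n, S.f * n * S.e = n → S.f * S.L a * S.f * n = n * γ) := by
  have key := hW {c | S.e * c * S.e = c ∧ ∃ γ, S.e * γ * S.e = γ ∧
      (∀ m, S.e * m * S.f = m → γ * m = m * (S.f * S.L c * S.f)) ∧
      (∀ n, S.f * n * S.e = n → S.f * S.L c * S.f * n = n * γ)}
    (fun x hx => hx.1) ?_ ?_ ?_ ?_ ?_ a ha
  · exact key.2
  · -- additive closure
    rintro x ⟨hcx, γ, hγ, hMx, hNx⟩ y ⟨hcy, γ', hγ', hMy, hNy⟩
    refine ⟨by rw [mul_add, add_mul, hcx, hcy], γ + γ',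
      by rw [mul_add, add_mul, hγ, hγ'], fun m hm => ?_, fun n hn => ?_⟩
    · rw [add_mul, hMx m hm, hMy m hm, map_add, mul_add, add_mul, mul_add]
    · rw [map_add, mul_add, add_mul, add_mul, hNx n hn, hNy n hn, mul_add]
  · -- smul closure
    rintro r x ⟨hcx, γ, hγ, hMx, hNx⟩
    refine ⟨by rw [mul_smul_comm, smul_mul_assoc, hcx], r • γ,
      by rw [mul_smul_comm, smul_mul_assoc, hγ], fun m hm => ?_, fun n hn => ?_⟩
    · rw [smul_mul_assoc, hMx m hm, map_smul, mul_smul_comm, smul_mul_assoc, mul_smul_comm]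
    · rw [map_smul, mul_smul_comm, smul_mul_assoc, smul_mul_assoc, hNx n hn, mul_smul_comm]
  · -- multiplicative closure
    rintro x ⟨hcx, γ, hγ, hMx, hNx⟩ y ⟨hcy, γ', hγ', hMy, hNy⟩
    have k1 := sandCorn S.he S.he (S.L (x * y))
    have kx := sandCorn S.he S.he (S.L x)
    have ky := sandCorn S.he S.he (S.L y)
    have k2 := cornMul S.he S.he kx hcy
    have k3 := cornMul S.he S.he hcx ky
    have k4 := cornMul S.he S.he hcx hγ'
    have k5 := cornMul S.he S.he hγ hcy
    refine ⟨cornMul S.he S.he hcx hcy,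
      S.e * S.L (x * y) * S.e - S.e * S.L x * S.e * y - x * (S.e * S.L y * S.e)
        + x * γ' + γ * y, ?_, fun m hm => ?_, fun n hn => ?_⟩
    · linear_combination (norm := noncomm_ring) k1 - k2 - k3 + k4 + k5
    · have q1 := S.l9 hcx hcy hm
      have q2 := hMy m hm
      have q3 := hMx _ (cornMul S.he S.hff hcy hm)
      linear_combination (norm := noncomm_ring) q1 + x * q2 + q3
    · have q1 := S.l10 hcx hcy hn
      have q2 := hNx n hn
      have q3 := hNy _ (cornMul S.hff S.he hn hcx)
      linear_combination (norm := noncomm_ring) -q1 + q2 * y + q3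
  · -- commutator closure
    intro x y hx hy
    refine ⟨by rw [mul_sub, sub_mul, cornMul S.he S.he hx hy, cornMul S.he S.he hy hx], 0,
      by rw [mul_zero, zero_mul], fun m hm => ?_, fun n hn => ?_⟩
    · rw [S.lcommf hx hy, zero_mul, mul_zero]
    · rw [S.lcommf hx hy, zero_mul, mul_zero]
  · -- idempotent closure
    intro c hc hid
    have kc := sandCorn S.he S.he (S.L c)
    have k2 := cornMul S.he S.he kc hc
    have k3 := cornMul S.he S.he hc kc
    have k4 := cornMul S.he S.he hc k2
    refine ⟨hc, S.e * S.L c * S.e - S.e * S.L c * S.e * c - c * (S.e * S.L c * S.e)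
        + c * (S.e * S.L c * S.e * c) + c * (S.e * S.L c * S.e * c),
      ?_, fun m hm => ?_, fun n hn => ?_⟩
    · linear_combination (norm := noncomm_ring) kc - k2 - k3 + 2 * k4
    · have k1 := S.l9 hc hc hm
      rw [hid] at k1
      linear_combination (norm := noncomm_ring) k1 - 2 * (c * k1)
        - 2 * (hid * (S.e * S.L c * S.e * m)) + 4 * (hid * (m * (S.f * S.L c * S.f)))
    · have k1 := S.l10 hc hc hn
      rw [hid] at k1
      linear_combination (norm := noncomm_ring) -k1 + 2 * (k1 * c)
        + 2 * ((n * (S.e * S.L c * S.e)) * hid) - 4 * ((S.f * S.L c * S.f * n) * hid)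

theorem part3
    (hcase :
      ((∀ b, (S.f * b * S.f = b ∧ ∀ x, S.f * x * S.f = x → b * x = x * b) ↔
          ∃ z, (∀ x, z * x = x * z) ∧ b = S.f * z * S.f) ∧ S.Faith) ∨
      (S.WA ∧ S.Faith) ∨ (S.LDPA ∧ S.WA)) :
    ∃ Γ : G → G,
      (∀ x y, Γ (x + y) = Γ x + Γ y) ∧
      (∀ (r : R) (x : G), Γ (r • x) = r • Γ x) ∧
      (∀ x, Γ x = Γ (S.e * x * S.e)) ∧
      (∀ a, S.e * a * S.e = a → S.Mate a (Γ a)) ∧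
      (∀ a a', S.e * a * S.e = a → S.e * a' * S.e = a' → Γ (a * a' - a' * a) = 0) ∧
      (∀ a a', S.e * a * S.e = a → S.e * a' * S.e = a' →
        S.e * S.L (a * a') * S.e - Γ (a * a') =
          (S.e * S.L a * S.e - Γ a) * a' + a * (S.e * S.L a' * S.e - Γ a')) := by
  have build : (∀ a, S.e * a * S.e = a → ∃ γ, S.Mate a γ) → S.Faith →
      ∃ Γ : G → G,
        (∀ x y, Γ (x + y) = Γ x + Γ y) ∧
        (∀ (r : R) (x : G), Γ (r • x) = r • Γ x) ∧
        (∀ x, Γ x = Γ (S.e * x * S.e)) ∧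
        (∀ a, S.e * a * S.e = a → S.Mate a (Γ a)) ∧
        (∀ a a', S.e * a * S.e = a → S.e * a' * S.e = a' → Γ (a * a' - a' * a) = 0) ∧
        (∀ a a', S.e * a * S.e = a → S.e * a' * S.e = a' →
          S.e * S.L (a * a') * S.e - Γ (a * a') =
            (S.e * S.L a * S.e - Γ a) * a' + a * (S.e * S.L a' * S.e - Γ a')) := by
    intro hEx hF
    have hExAll : ∀ x : G, ∃ γ, S.Mate (S.e * x * S.e) γ :=
      fun x => hEx _ (sandCorn S.he S.he x)
    choose Γ hΓ using hExAll
    have mateAt : ∀ a, S.e * a * S.e = a → S.Mate a (Γ a) := fun a ha => by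
      have := hΓ a; rwa [ha] at this
    refine ⟨Γ, ?_, ?_, ?_, mateAt, ?_, ?_⟩
    · intro x y
      have h2 := S.mate_add (hΓ x) (hΓ y)
      rw [← add_mul, ← mul_add] at h2
      exact S.mate_unique hF (hΓ (x + y)) h2
    · intro r x
      have h2 := S.mate_smul r (hΓ x)
      rw [← smul_mul_assoc, ← mul_smul_comm] at h2
      exact S.mate_unique hF (hΓ (r • x)) h2
    · intro x
      have h2 := hΓ (S.e * x * S.e)
      rw [sandCorn S.he S.he] at h2
      exact S.mate_unique hF (hΓ x) h2
    · intro a a' ha ha'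
      have h2 := hΓ (a * a' - a' * a)
      rw [show S.e * (a * a' - a' * a) * S.e = a * a' - a' * a from by
        rw [mul_sub, sub_mul, cornMul S.he S.he ha ha', cornMul S.he S.he ha' ha]] at h2
      exact S.mate_unique hF h2 (S.mate_comm ha ha')
    · intro a a' ha ha'
      exact S.mate_mult hF ha ha' (mateAt a ha) (mateAt a' ha')
        (mateAt _ (cornMul S.he S.he ha ha'))
  rcases hcase with ⟨hπ, hF⟩ | ⟨hW, hF⟩ | ⟨hLDP, hW⟩
  · exact build (fun a ha => S.mate_exists_pi hπ ha) hF
  · refine build (fun a ha => ?_) hF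
    obtain ⟨γ, h1, h2, h3⟩ := S.mate_exists_W hW ha
    exact ⟨γ, S.mate_of_conds hF ha h1 h2 h3⟩
  · -- case (iii): LDP of the corner plus W_A = A
    set PA : G →ₗ[R] G :=
      { toFun := fun x => S.e * x * S.e
        map_add' := fun x y => by simp only [mul_add, add_mul]
        map_smul' := fun r x => by simp only [RingHom.id_apply, mul_smul_comm, smul_mul_assoc] }
      with hPA
    set δℓ : G →ₗ[R] G := PA ∘ₗ S.L ∘ₗ PA with hδℓ
    have hδap : ∀ x, δℓ x = S.e * S.L (S.e * x * S.e) * S.e := fun x => rfl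
    have p1 : ∀ a, S.e * a * S.e = a → S.e * δℓ a * S.e = δℓ a := fun a ha => by
      rw [hδap]; exact sandCorn S.he S.he _
    have p2 : ∀ a a', S.e * a * S.e = a → S.e * a' * S.e = a' →
        δℓ (a * a' - a' * a) = δℓ a * a' - a' * δℓ a + (a * δℓ a' - δℓ a' * a) := by
      intro a a' ha ha'
      simp only [hδap]
      rw [show S.e * (a * a' - a' * a) * S.e = a * a' - a' * a from by
        rw [mul_sub, sub_mul, cornMul S.he S.he ha ha', cornMul S.he S.he ha' ha], ha, ha']
      exact S.lcomme ha ha'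
    obtain ⟨d, t, hd1, hd2, ht1, ht2, hdt⟩ := hLDP δℓ p1 p2
    have hδc : ∀ c, S.e * c * S.e = c → S.e * S.L c * S.e = d c + t c := fun c hc => by
      have h := hdt c hc; rw [hδap, hc] at h; exact h
    have key := hW {c | S.e * c * S.e = c ∧
        (∀ m, S.e * m * S.f = m → t c * m = m * (S.f * S.L c * S.f)) ∧
        (∀ n, S.f * n * S.e = n → S.f * S.L c * S.f * n = n * t c)}
      (fun x hx => hx.1) ?_ ?_ ?_ ?_ ?_
    · refine ⟨fun x => t (S.e * x * S.e), ?_, ?_, ?_, ?_, ?_, ?_⟩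
      · intro x y; simp only [mul_add, add_mul, map_add]
      · intro r x; simp only [mul_smul_comm, smul_mul_assoc, map_smul]
      · intro x; simp only [sandCorn S.he S.he]
      · intro a ha
        have hTa : t (S.e * a * S.e) = t a := by rw [ha]
        have hmem := key a ha
        exact ⟨by simp only [hTa]; exact (ht1 a ha).1,
          fun x hx => by simp only [hTa]; exact (ht1 a ha).2 x hx,
          fun m hm => by simp only [hTa]; exact hmem.2.1 m hm,
          fun n hn => by simp only [hTa]; exact hmem.2.2 n hn⟩
      · intro a a' ha ha'
        simp only [show S.e * (a * a' - a' * a) * S.e = a * a' - a' * a from by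
          rw [mul_sub, sub_mul, cornMul S.he S.he ha ha', cornMul S.he S.he ha' ha]]
        exact ht2 a a' ha ha'
      · intro a a' ha ha'
        have hc' := cornMul S.he S.he ha ha'
        have e1 := hδc _ hc'
        have e2 := hδc a ha
        have e3 := hδc a' ha'
        have e4 := hd2 a a' ha ha'
        simp only [show S.e * (a * a') * S.e = a * a' from hc', ha, ha']
        linear_combination (norm := noncomm_ring) e1 - e2 * a' - a * e3 + e4
    · -- additive closure
      rintro x ⟨hcx, hMx, hNx⟩ y ⟨hcy, hMy, hNy⟩
      refine ⟨by rw [mul_add, add_mul, hcx, hcy], fun m hm => ?_, fun n hn => ?_⟩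
      · simp only [map_add]
        rw [add_mul, hMx m hm, hMy m hm, mul_add, add_mul, mul_add]
      · simp only [map_add]
        rw [mul_add, add_mul, add_mul, hNx n hn, hNy n hn, mul_add]
    · -- smul closure
      rintro r x ⟨hcx, hMx, hNx⟩
      refine ⟨by rw [mul_smul_comm, smul_mul_assoc, hcx], fun m hm => ?_, fun n hn => ?_⟩
      · simp only [map_smul]
        rw [smul_mul_assoc, hMx m hm, mul_smul_comm, smul_mul_assoc, mul_smul_comm]
      · simp only [map_smul]
        rw [mul_smul_comm, smul_mul_assoc, smul_mul_assoc, hNx n hn, mul_smul_comm]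
    · -- multiplicative closure
      rintro x ⟨hcx, hMx, hNx⟩ y ⟨hcy, hMy, hNy⟩
      have hcxy := cornMul S.he S.he hcx hcy
      refine ⟨hcxy, fun m hm => ?_, fun n hn => ?_⟩
      · have q1 := S.l9 hcx hcy hm
        rw [hδc _ hcxy, hδc x hcx, hδc y hcy] at q1
        have q4 := hd2 x y hcx hcy
        have q2 := hMy m hm
        have q3 := hMx _ (cornMul S.he S.hff hcy hm)
        linear_combination (norm := noncomm_ring) q1 - q4 * m + x * q2 + q3
      · have q1 := S.l10 hcx hcy hn
        rw [hδc _ hcxy, hδc x hcx, hδc y hcy] at q1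
        have q4 := hd2 x y hcx hcy
        have q2 := hNx n hn
        have q3 := hNy _ (cornMul S.hff S.he hn hcx)
        linear_combination (norm := noncomm_ring) -q1 + n * q4 + q2 * y + q3
    · -- commutator closure
      intro x y hx hy
      refine ⟨by rw [mul_sub, sub_mul, cornMul S.he S.he hx hy, cornMul S.he S.he hy hx],
        fun m hm => ?_, fun n hn => ?_⟩
      · rw [ht2 x y hx hy, S.lcommf hx hy, zero_mul, mul_zero]
      · rw [ht2 x y hx hy, S.lcommf hx hy, zero_mul, mul_zero]
    · -- idempotent closure
      intro c hc hid
      refine ⟨hc, fun m hm => ?_, fun n hn => ?_⟩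
      · have k1 := S.l9 hc hc hm
        rw [hid, hδc c hc] at k1
        have hdd := hd2 c c hc hc
        rw [hid] at hdd
        have hZ := (ht1 c hc).2 c hc
        linear_combination (norm := noncomm_ring) k1 - hdd * m + hZ * m
          - 2 * (c * k1) + 2 * (c * hdd * m) - 2 * (c * hZ * m)
          - 4 * (hid * (t c * m)) + 4 * (hid * (m * (S.f * S.L c * S.f)))
      · have k1 := S.l10 hc hc hn
        rw [hid, hδc c hc] at k1
        have hdd := hd2 c c hc hc
        rw [hid] at hdd
        have hZ := (ht1 c hc).2 c hc
        linear_combination (norm := noncomm_ring) -k1 + n * hdd + n * hZ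
          + 2 * (k1 * c) - 2 * (n * hdd * c) - 2 * (n * hZ * c)
          + 4 * ((n * t c) * hid) - 4 * ((S.f * S.L c * S.f * n) * hid)

end Setup

private lemma gnorm1 {G : Type*} [Ring G] {e u : G} (he : e * e = e) :
    e * (u - ((u * e - e * u) * e - e * (u * e - e * u))) * (1 - e) = 0 := by
  linear_combination (norm := noncomm_ring) (e*u*e)*he - 2*(he*(u*e*e)) - 2*((e*u)*he)
    + 3*(he*(u*e)) + he*(e*(u*e)) - he*(e*u) - he*u

private lemma gnorm2 {G : Type*} [Ring G] {e u : G} (he : e * e = e) :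
    (1 - e) * (u - ((u * e - e * u) * e - e * (u * e - e * u))) * e = 0 := by
  linear_combination (norm := noncomm_ring) -((u*e)*he) - u*he + (e*u*e)*he
    - 2*(he*(u*e*e)) + (e*u)*he + he*(e*(u*e))

end Work

/-- Corollary 4.1, second part: a trivial generalized matrix algebra
(`MN = 0 = NM`) has the Lie derivation property provided conditions (I) and (II) hold. -/
theorem stmt_10
    {R : Type*} [CommRing R] {G : Type*} [Ring G] [Algebra R G]
    (e : G) (he : e * e = e) (he0 : e ≠ 0) (he1 : e ≠ 1)
    (hM2 : ∀ x : G, cM e x → x + x = 0 → x = 0)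
    (hN2 : ∀ x : G, cN e x → x + x = 0 → x = 0)
    (htriv : ∀ m n : G, cM e m → cN e n → m * n = 0 ∧ n * m = 0)
    (hI : (PiBeqZB e ∧ (∀ a : G, cA e a → (∀ m : G, cM e m → a * m = 0) → a = 0)) ∨
      (WAeqA R e ∧ (∀ a : G, cA e a → (∀ m : G, cM e m → a * m = 0) → a = 0)) ∨
      (LDPcornerA R e ∧ WAeqA R e))
    (hII : (PiAeqZA e ∧ (∀ b : G, cB e b → (∀ m : G, cM e m → m * b = 0) → b = 0)) ∨
      (WBeqB R e ∧ (∀ b : G, cB e b → (∀ m : G, cM e m → m * b = 0) → b = 0)) ∨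
      (LDPcornerB R e ∧ WBeqB R e)) :
    ∀ L : G →ₗ[R] G, IsLieDer L → IsProper L := by
  intro L₀ hL₀
  classical
  set g : G := L₀ e * e - e * L₀ e with hg
  set Dg : G →ₗ[R] G := LinearMap.mulLeft R g - LinearMap.mulRight R g with hDgdef
  have hDgap : ∀ x, Dg x = g * x - x * g := fun x => by
    simp [hDgdef, LinearMap.sub_apply, LinearMap.mulLeft_apply, LinearMap.mulRight_apply]
  set L : G →ₗ[R] G := L₀ - Dg with hLdef
  have hLap : ∀ x, L x = L₀ x - (g * x - x * g) := fun x => by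
    simp [hLdef, LinearMap.sub_apply, hDgap]
  have hLlie : IsLieDer L := fun x y => by
    have h := hL₀ x y
    simp only [hLap]
    rw [h]; noncomm_ring
  have hef' : e + (1 - e) = 1 := by abel
  have hLef' : e * L e * (1 - e) = 0 := by rw [hLap, hg]; exact gnorm1 he
  have hLfe' : (1 - e) * L e * e = 0 := by rw [hLap, hg]; exact gnorm2 he
  set S₀ : Setup R G := ⟨e, 1 - e, L, hef', he, hLlie, hLef', hLfe', hM2, hN2, htriv⟩ with hS₀def
  have hS₀e : S₀.e = e := rfl
  have hS₀f : S₀.f = 1 - e := rfl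
  have hS₀L : S₀.L = L := rfl
  have hswE : S₀.swap.e = 1 - e := rfl
  have hswF : S₀.swap.f = e := rfl
  have hswL : S₀.swap.L = L := rfl
  have hff' : (1 - e) * (1 - e) = 1 - e := S₀.hff
  have hef0' : e * (1 - e) = 0 := S₀.hef0
  have hfe0' : (1 - e) * e = 0 := S₀.hfe0
  have caseA : ((∀ b, (S₀.f * b * S₀.f = b ∧ ∀ x, S₀.f * x * S₀.f = x → b * x = x * b) ↔
      ∃ z, (∀ x, z * x = x * z) ∧ b = S₀.f * z * S₀.f) ∧ S₀.Faith) ∨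
      (S₀.WA ∧ S₀.Faith) ∨ (S₀.LDPA ∧ S₀.WA) := by
    rcases hI with ⟨h1, h2⟩ | ⟨h1, h2⟩ | ⟨h1, h2⟩
    · exact Or.inl ⟨h1, Or.inl h2⟩
    · exact Or.inr (Or.inl ⟨h1, Or.inl h2⟩)
    · exact Or.inr (Or.inr ⟨h1, h2⟩)
  have caseB : ((∀ b, (S₀.swap.f * b * S₀.swap.f = b ∧
        ∀ x, S₀.swap.f * x * S₀.swap.f = x → b * x = x * b) ↔
      ∃ z, (∀ x, z * x = x * z) ∧ b = S₀.swap.f * z * S₀.swap.f) ∧ S₀.swap.Faith) ∨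
      (S₀.swap.WA ∧ S₀.swap.Faith) ∨ (S₀.swap.LDPA ∧ S₀.swap.WA) := by
    rcases hII with ⟨h1, h2⟩ | ⟨h1, h2⟩ | ⟨h1, h2⟩
    · exact Or.inl ⟨h1, Or.inr h2⟩
    · exact Or.inr (Or.inl ⟨h1, Or.inr h2⟩)
    · exact Or.inr (Or.inr ⟨h1, h2⟩)
  obtain ⟨ΓA, hAadd, hAsmul, hAproj, hAmate, hAcomm, hAmult⟩ := S₀.part3 caseA
  obtain ⟨ΓB, hBadd, hBsmul, hBproj, hBmate, hBcomm, hBmult⟩ := S₀.swap.part3 caseB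
  simp only [hS₀e, hS₀f, hS₀L] at hAproj hAmate hAcomm hAmult
  simp only [hswE, hswF, hswL] at hBproj hBmate hBcomm hBmult
  -- the candidate central-valued map
  set τ : G →ₗ[R] G :=
    { toFun := fun x => ΓA x + (1 - e) * L (e * x * e) * (1 - e) +
        (ΓB x + e * L ((1 - e) * x * (1 - e)) * e)
      map_add' := fun x y => by
        simp only [hAadd, hBadd, mul_add, add_mul, map_add]
        abel
      map_smul' := fun r x => by
        simp only [hAsmul, hBsmul, mul_smul_comm, smul_mul_assoc, map_smul,
          RingHom.id_apply, smul_add] } with hτdef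
  have hτap : ∀ x, τ x = ΓA x + (1 - e) * L (e * x * e) * (1 - e) +
      (ΓB x + e * L ((1 - e) * x * (1 - e)) * e) := fun x => rfl
  have hA0 : ΓA 0 = 0 := by
    have h := hAadd 0 0
    rw [add_zero] at h
    linear_combination (norm := noncomm_ring) -h
  have hB0 : ΓB 0 = 0 := by
    have h := hBadd 0 0
    rw [add_zero] at h
    linear_combination (norm := noncomm_ring) -h
  have hτA : ∀ u, e * u * e = u → τ u = ΓA u + (1 - e) * L u * (1 - e) := by
    intro u hu
    have h1 : (1 - e) * u * (1 - e) = 0 := by rw [cornL0 hfe0' hu, zero_mul]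
    rw [hτap, hBproj u, hu, h1, hB0, map_zero]
    simp only [mul_zero, zero_mul, add_zero, zero_add]
  have hτB : ∀ u, (1 - e) * u * (1 - e) = u → τ u = ΓB u + e * L u * e := by
    intro u hu
    have h1 : e * u * e = 0 := by rw [cornL0 hef0' hu, zero_mul]
    rw [hτap, hAproj u, hu, h1, hA0, map_zero]
    simp only [mul_zero, zero_mul, add_zero, zero_add]
  have hτM : ∀ u, e * u * (1 - e) = u → τ u = 0 := by
    intro u hu
    have h1 : e * u * e = 0 := by rw [cornL he hu, cornR0 hfe0' hu]
    have h2 : (1 - e) * u * (1 - e) = 0 := by rw [cornL0 hfe0' hu, zero_mul]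
    rw [hτap, hAproj u, hBproj u, h1, h2, hA0, hB0, map_zero]
    simp only [mul_zero, zero_mul, add_zero, zero_add]
  have hτN : ∀ u, (1 - e) * u * e = u → τ u = 0 := by
    intro u hu
    have h1 : e * u * e = 0 := by rw [cornL0 hef0' hu, zero_mul]
    have h2 : (1 - e) * u * (1 - e) = 0 := by rw [cornL hff' hu, cornR0 hef0' hu]
    rw [hτap, hAproj u, hBproj u, h1, h2, hA0, hB0, map_zero]
    simp only [mul_zero, zero_mul, add_zero, zero_add]
  have hDA : ∀ u, e * u * e = u → L u - τ u = e * L u * e - ΓA u := by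
    intro u hu
    have q3 := S₀.lAmem hu
    simp only [hS₀e, hS₀f, hS₀L] at q3
    have t2 := hτA u hu
    linear_combination (norm := noncomm_ring) -q3 - t2
  have hDB : ∀ u, (1 - e) * u * (1 - e) = u →
      L u - τ u = (1 - e) * L u * (1 - e) - ΓB u := by
    intro u hu
    have q3 := S₀.swap.lAmem hu
    simp only [hswE, hswF, hswL] at q3
    have t2 := hτB u hu
    linear_combination (norm := noncomm_ring) -q3 - t2
  have hDAc : ∀ u, e * u * e = u → e * (L u - τ u) * e = L u - τ u := by
    intro u hu
    rw [hDA u hu, mul_sub, sub_mul, sandCorn he he, (hAmate u hu).1]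
  have hDBc : ∀ u, (1 - e) * u * (1 - e) = u →
      (1 - e) * (L u - τ u) * (1 - e) = L u - τ u := by
    intro u hu
    have hmB := (hBmate u hu).1
    simp only [hswE, hswF] at hmB
    rw [hDB u hu]
    linear_combination (norm := noncomm_ring) sandCorn hff' hff' (L u) - hmB
  have hDMc : ∀ u, e * u * (1 - e) = u → e * (L u - τ u) * (1 - e) = L u - τ u := by
    intro u hu
    have q := S₀.lMmem hu
    simp only [hS₀e, hS₀f, hS₀L] at q
    rw [hτM u hu, sub_zero]
    exact q
  have hDNc : ∀ u, (1 - e) * u * e = u → (1 - e) * (L u - τ u) * e = L u - τ u := by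
    intro u hu
    have q := S₀.swap.lMmem hu
    simp only [hswE, hswF, hswL] at q
    rw [hτN u hu, sub_zero]
    exact q
  -- the core derivation identity, proved corner by corner
  have base : ∀ u v,
      (e * u * e = u ∨ e * u * (1 - e) = u ∨ (1 - e) * u * e = u ∨ (1 - e) * u * (1 - e) = u) →
      (e * v * e = v ∨ e * v * (1 - e) = v ∨ (1 - e) * v * e = v ∨ (1 - e) * v * (1 - e) = v) →
      L (u * v) - τ (u * v) = (L u - τ u) * v + u * (L v - τ v) := by
    intro u v hu hv
    rcases hu with hu | hu | hu | hu <;> rcases hv with hv | hv | hv | hv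
    · -- (A,A)
      have q1 := hAmult u v hu hv
      have q2 := S₀.lAmem (cornMul he he hu hv)
      simp only [hS₀e, hS₀f, hS₀L] at q2
      have q3 := S₀.lAmem hu
      simp only [hS₀e, hS₀f, hS₀L] at q3
      have q4 := S₀.lAmem hv
      simp only [hS₀e, hS₀f, hS₀L] at q4
      have t1 := hτA _ (cornMul he he hu hv)
      have t2 := hτA u hu
      have t3 := hτA v hv
      linear_combination (norm := noncomm_ring) q1 - q2 - t1 + q3 * v + t2 * v + u * q4 + u * t3
    · -- (A,M)
      have q1 := S₀.li hu hv
      simp only [hS₀e, hS₀f, hS₀L] at q1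
      have q2 := (hAmate u hu).2.2.1 v hv
      simp only [hS₀e, hS₀f, hS₀L] at q2
      have q3 := S₀.lAmem hu
      simp only [hS₀e, hS₀f, hS₀L] at q3
      have t1 := hτM _ (cornMul he hff' hu hv)
      have t2 := hτA u hu
      have t3 := hτM v hv
      linear_combination (norm := noncomm_ring) q1 + q2 + q3 * v - t1 + t2 * v + u * t3
    · -- (A,N)
      have hz := cornMul0 hef0' hu hv
      have z1 := cornMul0 hef0' (hDAc u hu) hv
      have z2 := cornMul0 hef0' hu (hDNc v hv)
      rw [hz, z1, z2]
      simp
    · -- (A,B)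
      have hz := cornMul0 hef0' hu hv
      have z1 := cornMul0 hef0' (hDAc u hu) hv
      have z2 := cornMul0 hef0' hu (hDBc v hv)
      rw [hz, z1, z2]
      simp
    · -- (M,A)
      have hz := cornMul0 hfe0' hu hv
      have z1 := cornMul0 hfe0' (hDMc u hu) hv
      have z2 := cornMul0 hfe0' hu (hDAc v hv)
      rw [hz, z1, z2]
      simp
    · -- (M,M)
      have hz := cornMul0 hfe0' hu hv
      have z1 := cornMul0 hfe0' (hDMc u hu) hv
      have z2 := cornMul0 hfe0' hu (hDMc v hv)
      rw [hz, z1, z2]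
      simp
    · -- (M,N)
      have hz := (htriv u v hu hv).1
      have z1 := (htriv _ v (hDMc u hu) hv).1
      have z2 := (htriv u _ hu (hDNc v hv)).1
      rw [hz, z1, z2]
      simp
    · -- (M,B)
      have q1 := S₀.swap.liii hv hu
      simp only [hswE, hswF, hswL] at q1
      have q2 := (hBmate v hv).2.2.2 u hu
      simp only [hswE, hswF, hswL] at q2
      have q3 := S₀.swap.lAmem hv
      simp only [hswE, hswF, hswL] at q3
      have t1 := hτM _ (cornMul he hff' hu hv)
      have t2 := hτM u hu
      have t3 := hτB v hv
      linear_combination (norm := noncomm_ring) q1 - q2 + u * q3 - t1 + t2 * v + u * t3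
    · -- (N,A)
      have q1 := S₀.liii hv hu
      simp only [hS₀e, hS₀f, hS₀L] at q1
      have q2 := (hAmate v hv).2.2.2 u hu
      simp only [hS₀e, hS₀f, hS₀L] at q2
      have q3 := S₀.lAmem hv
      simp only [hS₀e, hS₀f, hS₀L] at q3
      have t1 := hτN _ (cornMul hff' he hu hv)
      have t2 := hτN u hu
      have t3 := hτA v hv
      linear_combination (norm := noncomm_ring) q1 - q2 + u * q3 - t1 + t2 * v + u * t3
    · -- (N,M)
      have hz := (htriv v u hv hu).2
      have z1 := (htriv v _ hv (hDNc u hu)).2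
      have z2 := (htriv _ u (hDMc v hv) hu).2
      rw [hz, z1, z2]
      simp
    · -- (N,N)
      have hz := cornMul0 hef0' hu hv
      have z1 := cornMul0 hef0' (hDNc u hu) hv
      have z2 := cornMul0 hef0' hu (hDNc v hv)
      rw [hz, z1, z2]
      simp
    · -- (N,B)
      have hz := cornMul0 hef0' hu hv
      have z1 := cornMul0 hef0' (hDNc u hu) hv
      have z2 := cornMul0 hef0' hu (hDBc v hv)
      rw [hz, z1, z2]
      simp
    · -- (B,A)
      have hz := cornMul0 hfe0' hu hv
      have z1 := cornMul0 hfe0' (hDBc u hu) hv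
      have z2 := cornMul0 hfe0' hu (hDAc v hv)
      rw [hz, z1, z2]
      simp
    · -- (B,M)
      have hz := cornMul0 hfe0' hu hv
      have z1 := cornMul0 hfe0' (hDBc u hu) hv
      have z2 := cornMul0 hfe0' hu (hDMc v hv)
      rw [hz, z1, z2]
      simp
    · -- (B,N)
      have q1 := S₀.swap.li hu hv
      simp only [hswE, hswF, hswL] at q1
      have q2 := (hBmate u hu).2.2.1 v hv
      simp only [hswE, hswF, hswL] at q2
      have q3 := S₀.swap.lAmem hu
      simp only [hswE, hswF, hswL] at q3
      have t1 := hτN _ (cornMul hff' he hu hv)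
      have t2 := hτB u hu
      have t3 := hτN v hv
      linear_combination (norm := noncomm_ring) q1 + q2 + q3 * v - t1 + t2 * v + u * t3
    · -- (B,B)
      have q1 := hBmult u v hu hv
      have q2 := S₀.swap.lAmem (cornMul hff' hff' hu hv)
      simp only [hswE, hswF, hswL] at q2
      have q3 := S₀.swap.lAmem hu
      simp only [hswE, hswF, hswL] at q3
      have q4 := S₀.swap.lAmem hv
      simp only [hswE, hswF, hswL] at q4
      have t1 := hτB _ (cornMul hff' hff' hu hv)
      have t2 := hτB u hu
      have t3 := hτB v hv
      linear_combination (norm := noncomm_ring) q1 - q2 - t1 + q3 * v + t2 * v + u * q4 + u * t3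
  have hdecomp : ∀ x : G, e * x * e + e * x * (1 - e) +
      ((1 - e) * x * e + (1 - e) * x * (1 - e)) = x := fun x => S₀.decomp x
  have core : ∀ x y, L (x * y) - τ (x * y) = (L x - τ x) * y + x * (L y - τ y) := by
    have comb : ∀ u₁ u₂ v,
        (L (u₁ * v) - τ (u₁ * v) = (L u₁ - τ u₁) * v + u₁ * (L v - τ v)) →
        (L (u₂ * v) - τ (u₂ * v) = (L u₂ - τ u₂) * v + u₂ * (L v - τ v)) →
        L ((u₁ + u₂) * v) - τ ((u₁ + u₂) * v) =
          (L (u₁ + u₂) - τ (u₁ + u₂)) * v + (u₁ + u₂) * (L v - τ v) := by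
      intro u₁ u₂ v h1 h2
      simp only [add_mul, map_add]
      linear_combination (norm := noncomm_ring) h1 + h2
    have comb' : ∀ u v₁ v₂,
        (L (u * v₁) - τ (u * v₁) = (L u - τ u) * v₁ + u * (L v₁ - τ v₁)) →
        (L (u * v₂) - τ (u * v₂) = (L u - τ u) * v₂ + u * (L v₂ - τ v₂)) →
        L (u * (v₁ + v₂)) - τ (u * (v₁ + v₂)) =
          (L u - τ u) * (v₁ + v₂) + u * (L (v₁ + v₂) - τ (v₁ + v₂)) := by
      intro u v₁ v₂ h1 h2
      simp only [mul_add, map_add]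
      linear_combination (norm := noncomm_ring) h1 + h2
    have row : ∀ u y,
        (e * u * e = u ∨ e * u * (1 - e) = u ∨ (1 - e) * u * e = u ∨
          (1 - e) * u * (1 - e) = u) →
        L (u * y) - τ (u * y) = (L u - τ u) * y + u * (L y - τ y) := by
      intro u y hu
      have r1 := base u _ hu (Or.inl (sandCorn he he y))
      have r2 := base u _ hu (Or.inr (Or.inl (sandCorn he hff' y)))
      have r3 := base u _ hu (Or.inr (Or.inr (Or.inl (sandCorn hff' he y))))
      have r4 := base u _ hu (Or.inr (Or.inr (Or.inr (sandCorn hff' hff' y))))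
      have h12 := comb' u _ _ r1 r2
      have h34 := comb' u _ _ r3 r4
      have hall := comb' u _ _ h12 h34
      rwa [hdecomp y] at hall
    intro x y
    have r1 := row _ y (Or.inl (sandCorn he he x))
    have r2 := row _ y (Or.inr (Or.inl (sandCorn he hff' x)))
    have r3 := row _ y (Or.inr (Or.inr (Or.inl (sandCorn hff' he x))))
    have r4 := row _ y (Or.inr (Or.inr (Or.inr (sandCorn hff' hff' x))))
    have h12 := comb _ _ y r1 r2
    have h34 := comb _ _ y r3 r4
    have hall := comb _ _ y h12 h34
    rwa [hdecomp x] at hall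
  refine ⟨L₀ - τ, τ, ?_, ?_, ?_, ?_⟩
  · -- IsDer (L₀ - τ)
    intro x y
    have h1 := core x y
    simp only [hLap] at h1
    simp only [LinearMap.sub_apply]
    linear_combination (norm := noncomm_ring) h1
  · -- centrality of τ
    intro x
    intro y
    have c1 := S₀.mate_central (sandCorn he he x) (hAmate _ (sandCorn he he x)) y
    simp only [hS₀e, hS₀f, hS₀L] at c1
    have c2 := S₀.swap.mate_central (sandCorn hff' hff' x)
      (hBmate _ (sandCorn hff' hff' x)) y
    simp only [hswE, hswF, hswL] at c2
    have hτx : τ x = (ΓA (e * x * e) + (1 - e) * L (e * x * e) * (1 - e)) +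
        (ΓB ((1 - e) * x * (1 - e)) + e * L ((1 - e) * x * (1 - e)) * e) := by
      rw [hτap, hAproj x, hBproj x]
    rw [hτx]
    linear_combination (norm := noncomm_ring) c1 + c2
  · -- τ kills commutators
    intro x y
    have k1 := S₀.cornerComm x y
    simp only [hS₀e, hS₀f, hS₀L] at k1
    have k2 := S₀.swap.cornerComm x y
    simp only [hswE, hswF, hswL] at k2
    rw [hτap, hAproj, hBproj, k1, k2,
      hAcomm _ _ (sandCorn he he x) (sandCorn he he y),
      hBcomm _ _ (sandCorn hff' hff' x) (sandCorn hff' hff' y)]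
    have k3 := S₀.lcommf (sandCorn he he x) (sandCorn he he y)
    simp only [hS₀e, hS₀f, hS₀L] at k3
    have k4 := S₀.swap.lcommf (a := (1 - e) * x * (1 - e)) (a' := (1 - e) * y * (1 - e))
      (sandCorn hff' hff' x) (sandCorn hff' hff' y)
    simp only [hswE, hswF, hswL] at k4
    rw [k3, k4]
    simp
  · -- decomposition of L₀
    ext x
    simp only [LinearMap.add_apply, LinearMap.sub_apply]
    abel
end

section
/- There exist a unital associative ℚ-algebra G and an idempotent e ∈ G with e ≠ 0 and e ≠ 1, with f = 1 − e, such that: eGf ≠ {0}, (eGf)·(fGe) = {0} and (fGe)·(eGf) = {0}, the corner algebras eGe and fGf are commutative, and there exists a ℚ-linear Lie derivation L : G → G that is not proper. -/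
/-- The 8-dimensional counterexample algebra: a trivial generalized matrix algebra
`G = A ⊕ M ⊕ N ⊕ B` with `A = ℚ[s]/(s²)` (coords `a`, `s`), `B = ℚ[t]/(t²)`
(coords `b`, `t`), `M = ℚ²` (coords `m0`, `m1`) with `s·m0 = m1`, `m0·t = m1`,
and `N = ℚ²` (coords `n0`, `n1`) with `t·n = 0`, `n0·s = n1`. -/
@[ext] structure E : Type where
  a : ℚ
  s : ℚ
  b : ℚ
  t : ℚ
  m0 : ℚ
  m1 : ℚ
  n0 : ℚ
  n1 : ℚ

namespace E

instance : Zero E := ⟨⟨0,0,0,0,0,0,0,0⟩⟩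
instance : One E := ⟨⟨1,0,1,0,0,0,0,0⟩⟩
instance : Add E := ⟨fun x y => ⟨x.a+y.a, x.s+y.s, x.b+y.b, x.t+y.t,
  x.m0+y.m0, x.m1+y.m1, x.n0+y.n0, x.n1+y.n1⟩⟩
instance : Neg E := ⟨fun x => ⟨-x.a, -x.s, -x.b, -x.t, -x.m0, -x.m1, -x.n0, -x.n1⟩⟩
instance : SMul ℚ E := ⟨fun r x => ⟨r*x.a, r*x.s, r*x.b, r*x.t,
  r*x.m0, r*x.m1, r*x.n0, r*x.n1⟩⟩
instance : Mul E := ⟨fun x y => ⟨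
  x.a*y.a,
  x.a*y.s + x.s*y.a,
  x.b*y.b,
  x.b*y.t + x.t*y.b,
  x.a*y.m0 + x.m0*y.b,
  x.a*y.m1 + x.s*y.m0 + x.m0*y.t + x.m1*y.b,
  x.b*y.n0 + x.n0*y.a,
  x.b*y.n1 + x.n1*y.a + x.n0*y.s⟩⟩

@[simp] lemma zero_a : (0:E).a = 0 := rfl
@[simp] lemma zero_s : (0:E).s = 0 := rfl
@[simp] lemma zero_b : (0:E).b = 0 := rfl
@[simp] lemma zero_t : (0:E).t = 0 := rfl
@[simp] lemma zero_m0 : (0:E).m0 = 0 := rfl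
@[simp] lemma zero_m1 : (0:E).m1 = 0 := rfl
@[simp] lemma zero_n0 : (0:E).n0 = 0 := rfl
@[simp] lemma zero_n1 : (0:E).n1 = 0 := rfl

@[simp] lemma one_a : (1:E).a = 1 := rfl
@[simp] lemma one_s : (1:E).s = 0 := rfl
@[simp] lemma one_b : (1:E).b = 1 := rfl
@[simp] lemma one_t : (1:E).t = 0 := rfl
@[simp] lemma one_m0 : (1:E).m0 = 0 := rfl
@[simp] lemma one_m1 : (1:E).m1 = 0 := rfl
@[simp] lemma one_n0 : (1:E).n0 = 0 := rfl
@[simp] lemma one_n1 : (1:E).n1 = 0 := rfl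

variable (x y : E) (r : ℚ)

@[simp] lemma add_a : (x+y).a = x.a+y.a := rfl
@[simp] lemma add_s : (x+y).s = x.s+y.s := rfl
@[simp] lemma add_b : (x+y).b = x.b+y.b := rfl
@[simp] lemma add_t : (x+y).t = x.t+y.t := rfl
@[simp] lemma add_m0 : (x+y).m0 = x.m0+y.m0 := rfl
@[simp] lemma add_m1 : (x+y).m1 = x.m1+y.m1 := rfl
@[simp] lemma add_n0 : (x+y).n0 = x.n0+y.n0 := rfl
@[simp] lemma add_n1 : (x+y).n1 = x.n1+y.n1 := rfl

@[simp] lemma neg_a : (-x).a = -x.a := rfl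
@[simp] lemma neg_s : (-x).s = -x.s := rfl
@[simp] lemma neg_b : (-x).b = -x.b := rfl
@[simp] lemma neg_t : (-x).t = -x.t := rfl
@[simp] lemma neg_m0 : (-x).m0 = -x.m0 := rfl
@[simp] lemma neg_m1 : (-x).m1 = -x.m1 := rfl
@[simp] lemma neg_n0 : (-x).n0 = -x.n0 := rfl
@[simp] lemma neg_n1 : (-x).n1 = -x.n1 := rfl

@[simp] lemma smul_a : (r • x).a = r*x.a := rfl
@[simp] lemma smul_s : (r • x).s = r*x.s := rfl
@[simp] lemma smul_b : (r • x).b = r*x.b := rfl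
@[simp] lemma smul_t : (r • x).t = r*x.t := rfl
@[simp] lemma smul_m0 : (r • x).m0 = r*x.m0 := rfl
@[simp] lemma smul_m1 : (r • x).m1 = r*x.m1 := rfl
@[simp] lemma smul_n0 : (r • x).n0 = r*x.n0 := rfl
@[simp] lemma smul_n1 : (r • x).n1 = r*x.n1 := rfl

@[simp] lemma mul_a : (x*y).a = x.a*y.a := rfl
@[simp] lemma mul_s : (x*y).s = x.a*y.s + x.s*y.a := rfl
@[simp] lemma mul_b : (x*y).b = x.b*y.b := rfl
@[simp] lemma mul_t : (x*y).t = x.b*y.t + x.t*y.b := rfl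
@[simp] lemma mul_m0 : (x*y).m0 = x.a*y.m0 + x.m0*y.b := rfl
@[simp] lemma mul_m1 : (x*y).m1 = x.a*y.m1 + x.s*y.m0 + x.m0*y.t + x.m1*y.b := rfl
@[simp] lemma mul_n0 : (x*y).n0 = x.b*y.n0 + x.n0*y.a := rfl
@[simp] lemma mul_n1 : (x*y).n1 = x.b*y.n1 + x.n1*y.a + x.n0*y.s := rfl

instance addCommGroup : AddCommGroup E where
  add := (· + ·)
  zero := 0
  neg := (- ·)
  nsmul := nsmulRec
  zsmul := zsmulRec
  add_assoc := by intros; ext <;> simp <;> ring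
  zero_add := by intros; ext <;> simp
  add_zero := by intros; ext <;> simp
  add_comm := by intros; ext <;> simp <;> ring
  neg_add_cancel := by intros; ext <;> simp

@[simp] lemma sub_a : (x-y).a = x.a-y.a := by rw [sub_eq_add_neg]; simp; ring
@[simp] lemma sub_s : (x-y).s = x.s-y.s := by rw [sub_eq_add_neg]; simp; ring
@[simp] lemma sub_b : (x-y).b = x.b-y.b := by rw [sub_eq_add_neg]; simp; ring
@[simp] lemma sub_t : (x-y).t = x.t-y.t := by rw [sub_eq_add_neg]; simp; ring
@[simp] lemma sub_m0 : (x-y).m0 = x.m0-y.m0 := by rw [sub_eq_add_neg]; simp; ring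
@[simp] lemma sub_m1 : (x-y).m1 = x.m1-y.m1 := by rw [sub_eq_add_neg]; simp; ring
@[simp] lemma sub_n0 : (x-y).n0 = x.n0-y.n0 := by rw [sub_eq_add_neg]; simp; ring
@[simp] lemma sub_n1 : (x-y).n1 = x.n1-y.n1 := by rw [sub_eq_add_neg]; simp; ring

instance ring : Ring E where
  __ := addCommGroup
  mul := (· * ·)
  one := 1
  left_distrib := by intros; ext <;> simp <;> ring
  right_distrib := by intros; ext <;> simp <;> ring
  zero_mul := by intros; ext <;> simp
  mul_zero := by intros; ext <;> simp
  mul_assoc := by intros; ext <;> simp <;> ring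
  one_mul := by intros; ext <;> simp
  mul_one := by intros; ext <;> simp

instance module : Module ℚ E where
  smul := (· • ·)
  one_smul := by intros; ext <;> simp
  mul_smul := by intros; ext <;> simp <;> ring
  smul_zero := by intros; ext <;> simp
  smul_add := by intros; ext <;> simp <;> ring
  add_smul := by intros; ext <;> simp <;> ring
  zero_smul := by intros; ext <;> simp

instance algebra : Algebra ℚ E :=
  Algebra.ofModule
    (by intros; ext <;> simp <;> ring)
    (by intros; ext <;> simp <;> ring)

/-- The non-proper Lie derivation: `L(s) = t`, `L(t) = -t`, `L(m0) = m0`. -/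
def L0 : E →ₗ[ℚ] E where
  toFun x := ⟨0, 0, 0, x.s - x.t, x.m0, 0, 0, 0⟩
  map_add' := by intros; ext <;> simp <;> ring
  map_smul' := by intros; ext <;> simp <;> ring

@[simp] lemma L0_a : (L0 x).a = 0 := rfl
@[simp] lemma L0_s : (L0 x).s = 0 := rfl
@[simp] lemma L0_b : (L0 x).b = 0 := rfl
@[simp] lemma L0_t : (L0 x).t = x.s - x.t := rfl
@[simp] lemma L0_m0 : (L0 x).m0 = x.m0 := rfl
@[simp] lemma L0_m1 : (L0 x).m1 = 0 := rfl
@[simp] lemma L0_n0 : (L0 x).n0 = 0 := rfl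
@[simp] lemma L0_n1 : (L0 x).n1 = 0 := rfl

/-- distinguished elements -/
def eE : E := ⟨1,0,0,0,0,0,0,0⟩
def sE : E := ⟨0,1,0,0,0,0,0,0⟩
def tE : E := ⟨0,0,0,1,0,0,0,0⟩
def m0E : E := ⟨0,0,0,0,1,0,0,0⟩
def m1E : E := ⟨0,0,0,0,0,1,0,0⟩
def n0E : E := ⟨0,0,0,0,0,0,1,0⟩

lemma corner_M (x : E) : eE * x * (1 - eE) = ⟨0,0,0,0,x.m0,x.m1,0,0⟩ := by
  ext <;> simp [eE]

lemma corner_N (x : E) : (1 - eE) * x * eE = ⟨0,0,0,0,0,0,x.n0,x.n1⟩ := by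
  ext <;> simp [eE]

lemma corner_A (x : E) : eE * x * eE = ⟨x.a,x.s,0,0,0,0,0,0⟩ := by
  ext <;> simp [eE]

lemma corner_B (x : E) : (1 - eE) * x * (1 - eE) = ⟨0,0,x.b,x.t,0,0,0,0⟩ := by
  ext <;> simp [eE]

end E

/-- A counterexample package: a trivial generalized matrix algebra over `ℚ` with nonzero
`M = eGf`, commutative corner algebras, carrying a non-proper Lie derivation. -/
structure TrivialGMACounterexample : Type 1 where
  /-- The underlying algebra. -/
  G : Type
  [ringG : Ring G]
  [algG : Algebra ℚ G]
  /-- The idempotent giving the Peirce decomposition. -/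
  e : G
  idem : e * e = e
  e_ne_zero : e ≠ 0
  e_ne_one : e ≠ (1 : G)
  /-- `eGf ≠ {0}`. -/
  M_ne_zero : ∃ m : G, e * m * (1 - e) = m ∧ m ≠ 0
  /-- `(eGf)·(fGe) = {0}`. -/
  MN_zero : ∀ m n : G, e * m * (1 - e) = m → (1 - e) * n * e = n → m * n = 0
  /-- `(fGe)·(eGf) = {0}`. -/
  NM_zero : ∀ m n : G, e * m * (1 - e) = m → (1 - e) * n * e = n → n * m = 0
  /-- The corner `eGe` is commutative. -/
  A_comm : ∀ a a' : G, e * a * e = a → e * a' * e = a' → a * a' = a' * a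
  /-- The corner `fGf` is commutative. -/
  B_comm : ∀ b b' : G,
    (1 - e) * b * (1 - e) = b → (1 - e) * b' * (1 - e) = b' → b * b' = b' * b
  /-- A `ℚ`-linear Lie derivation of `G`. -/
  L : G →ₗ[ℚ] G
  L_lie : ∀ x y : G, L (x * y - y * x) = L x * y - y * L x + (x * L y - L y * x)
  /-- `L` is not proper. -/
  L_not_proper : ¬ ∃ D τ : G →ₗ[ℚ] G,
    (∀ x y : G, D (x * y) = D x * y + x * D y) ∧
    (∀ x y : G, τ x * y = y * τ x) ∧
    (∀ x y : G, τ (x * y - y * x) = 0) ∧ L = D + τ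

/-- Example 4.2: there exists a trivial generalized matrix algebra over
`ℚ`, with `eGf ≠ 0` and commutative corners, admitting a non-proper Lie derivation. -/
theorem stmt_11 : Nonempty TrivialGMACounterexample := by
  refine ⟨{
    G := E
    e := E.eE
    idem := by ext <;> simp [E.eE]
    e_ne_zero := by
      intro h
      have := congrArg E.a h
      simp [E.eE] at this
    e_ne_one := by
      intro h
      have := congrArg E.b h
      simp [E.eE] at this
    M_ne_zero := by
      refine ⟨E.m0E, by rw [E.corner_M]; ext <;> simp [E.m0E], fun h => ?_⟩
      have := congrArg E.m0 h
      simp [E.m0E] at this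
    MN_zero := by
      intro m n hm hn
      rw [E.corner_M] at hm
      rw [E.corner_N] at hn
      rw [← hm, ← hn]
      ext <;> simp
    NM_zero := by
      intro m n hm hn
      rw [E.corner_M] at hm
      rw [E.corner_N] at hn
      rw [← hm, ← hn]
      ext <;> simp
    A_comm := by
      intro x y hx hy
      rw [E.corner_A] at hx hy
      rw [← hx, ← hy]
      ext <;> simp <;> ring
    B_comm := by
      intro x y hx hy
      rw [E.corner_B] at hx hy
      rw [← hx, ← hy]
      ext <;> simp <;> ring
    L := E.L0
    L_lie := by
      intro x y
      ext <;> simp <;> ring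
    L_not_proper := ?_ }⟩
  rintro ⟨D, τ, hD, hC, hK, hL⟩
  have hLx : ∀ x, E.L0 x = D x + τ x := fun x => by rw [hL]; rfl
  -- (τ s).s = 0 from centrality against n0
  have hzs0 : (τ E.sE).s = 0 := by
    have h := hC E.sE E.n0E
    have h2 := congrArg E.n1 h
    simp [E.sE, E.n0E] at h2 ⊢
    linarith
  -- D s = t - τ s
  have hDs : D E.sE = E.tE - τ E.sE := by
    have h := hLx E.sE
    have h2 : E.L0 E.sE = E.tE := by ext <;> simp [E.sE, E.tE]
    rw [h2] at h
    rw [eq_sub_iff_add_eq, ← h]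
  -- (τ s).a = 0 from D(s*s) = 0
  have hza0 : (τ E.sE).a = 0 := by
    have hss : E.sE * E.sE = 0 := by ext <;> simp [E.sE]
    have h := hD E.sE E.sE
    rw [hss, map_zero, hDs] at h
    have h2 := congrArg E.s h
    simp [E.sE, E.tE] at h2 ⊢
    linarith
  -- τ m0 = 0, so D m0 = m0
  have htm0 : τ E.m0E = 0 := by
    have h := hK E.eE E.m0E
    have h2 : E.eE * E.m0E - E.m0E * E.eE = E.m0E := by
      ext <;> simp [E.eE, E.m0E]
    rwa [h2] at h
  have hDm0 : D E.m0E = E.m0E := by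
    have h := hLx E.m0E
    rw [htm0, add_zero] at h
    rw [← h]
    ext <;> simp [E.m0E]
  -- τ m1 = 0, so D m1 = L m1 = 0
  have htm1 : τ E.m1E = 0 := by
    have h := hK E.sE E.m0E
    have h2 : E.sE * E.m0E - E.m0E * E.sE = E.m1E := by
      ext <;> simp [E.sE, E.m0E, E.m1E]
    rwa [h2] at h
  have hDm1 : D E.m1E = 0 := by
    have h := hLx E.m1E
    rw [htm1, add_zero] at h
    rw [← h]
    ext <;> simp [E.m1E]
  -- contradiction from D(s * m0)
  have hsm0 : E.sE * E.m0E = E.m1E := by ext <;> simp [E.sE, E.m0E, E.m1E]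
  have h := hD E.sE E.m0E
  rw [hsm0, hDm1, hDs, hDm0] at h
  have h2 := congrArg E.m1 h
  simp only [E.sE] at hzs0
  simp [E.sE, E.tE, E.m0E, hzs0] at h2
end

section
/- Let A be a 2-torsion free unital associative R-algebra and let n ≥ 3. Then the full matrix algebra M_n(A) has the Lie derivation property: every R-linear map L : M_n(A) → M_n(A) satisfying L([x,y]) = [L(x),y] + [x,L(y)] for all x, y can be written as L = D + τ, where D is a derivation of M_n(A) and τ : M_n(A) → M_n(A) is R-linear with values in the center of M_n(A) and τ([x,y]) = 0 for all x, y ∈ M_n(A). -/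
/-!
Adding the inner derivation `ad T`, `T = ∑ₗ eₗₗ L(eₗₗ)`, turns `L` into a Lie derivation `Λ`
that sends every diagonal unit `eᵢᵢ` to a central scalar matrix. Bracketing with the `eᵢᵢ` then
shows `Λ(a eᵢⱼ) ∈ A eᵢⱼ` for `i ≠ j` (here 2-torsion freeness is used) and
`Λ(a eᵢᵢ) = ψᵢ(a) eᵢᵢ + ζ(a) 1` with `ζ` central-valued; a third index gives `ζ(ab) = ζ(ba)`.
The brackets `[a eᵢⱼ, b eⱼₖ]` yield Leibniz-type rules for the coefficient maps, which force them
all to come from a single derivation `δ` of `A`, twisted by a diagonal matrix `diag t`. Hence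
`Λ = ad (diag t) + δ.mapMatrix + ζ ∘ trace`, and `L = D + τ` with
`D = ad (diag t - T) + δ.mapMatrix` and `τ x = ζ (trace x) • 1`.
-/

open Matrix

namespace MatrixLieDerivation

section Derivations

variable {B : Type*} [Ring B]

def IsDerivation (D : B → B) : Prop := ∀ x y, D (x * y) = D x * y + x * D y

def IsLieDerivation (L : B → B) : Prop :=
  ∀ x y, L (x * y - y * x) = L x * y - y * L x + (x * L y - L y * x)

theorem IsDerivation.add {D D' : B → B} (hD : IsDerivation D) (hD' : IsDerivation D') :
    IsDerivation (D + D') := fun x y => by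
  simp only [Pi.add_apply, hD x y, hD' x y]
  noncomm_ring

theorem IsLieDerivation.add {L L' : B → B} (hL : IsLieDerivation L)
    (hL' : IsLieDerivation L') : IsLieDerivation (L + L') := fun x y => by
  simp only [Pi.add_apply, hL x y, hL' x y]
  noncomm_ring

theorem IsDerivation.isLieDerivation {F : Type*} [FunLike F B B] [AddMonoidHomClass F B B]
    {D : F} (hD : IsDerivation D) : IsLieDerivation D := fun x y => by
  rw [map_sub, hD, hD]
  abel

theorem IsDerivation.mapMatrix {R ι : Type*} [CommRing R] [Module R B] [Fintype ι]
    [DecidableEq ι] {δ : B →ₗ[R] B} (hδ : IsDerivation δ) :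
    IsDerivation (δ.mapMatrix : Matrix ι ι B →ₗ[R] Matrix ι ι B) := fun x y => by
  ext p q
  simp only [LinearMap.mapMatrix_apply, map_apply, mul_apply, Matrix.add_apply, map_sum,
    ← Finset.sum_add_distrib]
  exact Finset.sum_congr rfl fun k _ => hδ _ _

variable (R : Type*) [CommRing R] [Algebra R B]

def ad (T : B) : B →ₗ[R] B := LinearMap.mulLeft R T - LinearMap.mulRight R T

variable {R}

@[simp]
theorem ad_apply (T x : B) : ad R T x = T * x - x * T := rfl

theorem isDerivation_ad (T : B) : IsDerivation (ad R T) := fun x y => by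
  simp only [ad_apply]
  noncomm_ring

end Derivations

section Normalization

variable {R A ι : Type*} [CommRing R] [Ring A] [Algebra R A] [Fintype ι] [DecidableEq ι]
  {L : Matrix ι ι A →ₗ[R] Matrix ι ι A}

def innerCorrection (L : Matrix ι ι A →ₗ[R] Matrix ι ι A) : Matrix ι ι A :=
  ∑ l, single l l 1 * L (single l l 1)

theorem innerCorrection_apply (p q : ι) : innerCorrection L p q = L (single p p 1) p q := by
  rw [innerCorrection, Matrix.sum_apply, Finset.sum_eq_single p] <;>
    simp +contextual [Ne.symm]

theorem IsLieDerivation.apply_single_one_apply_of_ne (hL : IsLieDerivation L) {i p q : ι}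
    (hpi : p ≠ i) (hqp : q ≠ p) (hqi : q ≠ i) : L (single i i 1) p q = 0 := by
  have h := congr($(hL (single i i 1) (single p p 1)) p q)
  simpa [hpi, hpi.symm, hqp, hqi] using h.symm

theorem IsLieDerivation.apply_single_one_apply_add_apply_single_one_apply
    (hL : IsLieDerivation L) {i p : ι} (hpi : p ≠ i) :
    L (single i i 1) p i + L (single p p 1) p i = 0 := by
  have h := congr($(hL (single i i 1) (single p p 1)) p i)
  simp [hpi, hpi.symm] at h
  rwa [← neg_add, eq_comm, neg_eq_zero] at h

theorem IsLieDerivation.add_ad_innerCorrection_apply_single_one_of_ne (hL : IsLieDerivation L)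
    (i : ι) {p q : ι} (hpq : p ≠ q) : (L + ad R (innerCorrection L)) (single i i 1) p q = 0 := by
  simp only [LinearMap.add_apply, ad_apply, Matrix.add_apply, Matrix.sub_apply]
  by_cases hpi : p = i
  · subst hpi
    simp [hpq.symm, innerCorrection_apply]
  by_cases hqi : q = i
  · subst hqi
    simpa [hpi, innerCorrection_apply] using
      hL.apply_single_one_apply_add_apply_single_one_apply hpi
  · simp [hpi, hqi, hL.apply_single_one_apply_of_ne hpi (Ne.symm hpq) hqi]

end Normalization

section Centralization

variable {R A ι : Type*} [CommRing R] [Ring A] [Algebra R A] [Fintype ι] [DecidableEq ι]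
  {Λ : Matrix ι ι A →ₗ[R] Matrix ι ι A}

theorem IsLieDerivation.apply_single_one_apply_mul_comm (hΛ : IsLieDerivation Λ) {i j : ι}
    (hij : i ≠ j) (a : A) : Λ (single i i 1) i i * a = a * Λ (single i i 1) j j := by
  have h := congr($(hΛ (single i i 1) (single i j a)) i j)
  simp [hij.symm] at h
  exact sub_eq_zero.mp h

theorem IsLieDerivation.apply_single_one_eq_scalar (hΛ : IsLieDerivation Λ)
    (hdiag : ∀ i p q, p ≠ q → Λ (single i i 1) p q = 0) (i : ι) :
    Λ (single i i 1) = scalar ι (Λ (single i i 1) i i) := by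
  ext p q
  rcases eq_or_ne p q with rfl | hpq
  · rcases eq_or_ne p i with rfl | hpi
    · simp
    · simpa using (hΛ.apply_single_one_apply_mul_comm (Ne.symm hpi) 1).symm
  · simp [hdiag i p q hpq, hpq]

theorem IsLieDerivation.commute_apply_single_one [Nontrivial ι] (hΛ : IsLieDerivation Λ)
    (hdiag : ∀ i p q, p ≠ q → Λ (single i i 1) p q = 0) (i : ι) (x : Matrix ι ι A) :
    Commute (Λ (single i i 1)) x := by
  obtain ⟨j, hji⟩ := exists_ne i
  rw [hΛ.apply_single_one_eq_scalar hdiag]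
  refine scalar_commute _ (fun a => ?_) x
  have hscalar := hΛ.apply_single_one_apply_mul_comm (Ne.symm hji) 1
  rw [mul_one, one_mul] at hscalar
  exact (hΛ.apply_single_one_apply_mul_comm (Ne.symm hji) a).trans (by rw [← hscalar])

theorem IsLieDerivation.add_ad (hΛ : IsLieDerivation Λ) (T : Matrix ι ι A) :
    IsLieDerivation (Λ + ad R T) := by
  show IsLieDerivation (⇑Λ + ⇑(ad R T))
  exact hΛ.add (isDerivation_ad T).isLieDerivation

theorem IsLieDerivation.exists_commute_add_ad [Nontrivial ι] (hΛ : IsLieDerivation Λ) :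
    ∃ T : Matrix ι ι A, IsLieDerivation (Λ + ad R T) ∧
      ∀ i x, Commute ((Λ + ad R T) (single i i 1)) x :=
  ⟨innerCorrection Λ, hΛ.add_ad _, (hΛ.add_ad _).commute_apply_single_one
    fun i _ _ => hΛ.add_ad_innerCorrection_apply_single_one_of_ne i⟩

end Centralization

theorem exists_ne_ne_of_two_lt_card {ι : Type*} [Fintype ι] [DecidableEq ι]
    (h : 2 < Fintype.card ι) (i j : ι) : ∃ k, k ≠ i ∧ k ≠ j := by
  obtain ⟨k, -, hk⟩ := Finset.exists_mem_notMem_of_card_lt_card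
    (s := {i, j}) (t := Finset.univ) ((Finset.card_le_two).trans_lt h)
  simp only [Finset.mem_insert, Finset.mem_singleton, not_or] at hk
  exact ⟨k, hk⟩

section Structure

variable {R A ι : Type*} [CommRing R] [Ring A] [Algebra R A] [Fintype ι] [DecidableEq ι]
  {Λ : Matrix ι ι A →ₗ[R] Matrix ι ι A} (hΛ : IsLieDerivation Λ)
  (hcent : ∀ i x, Commute (Λ (single i i 1)) x)
include hΛ hcent

theorem apply_single_diag_apply_of_ne (i : ι) (a : A) {p q : ι} (hpq : p ≠ q) :
    Λ (single i i a) p q = 0 := by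
  have hcomm : single i i a * single q q 1 - single q q 1 * single i i a = 0 := by
    rcases eq_or_ne i q with rfl | hiq
    · simp
    · simp [hiq, hiq.symm]
  have h := congr($(hΛ (single i i a) (single q q 1)) p q)
  rw [hcomm, map_zero, (hcent q _).eq, sub_self, add_zero] at h
  simpa [hpq] using h.symm

variable (h2 : ∀ a : A, a + a = 0 → a = 0)
include h2

theorem apply_single_of_ne {i j : ι} (hij : i ≠ j) (a : A) :
    Λ (single i j a) = single i j (Λ (single i j a) i j) := by
  have hleft := hΛ (single i i 1) (single i j a)
  rw [single_mul_single_same, one_mul, single_mul_single_of_ne (h := hij.symm), sub_zero,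
    (hcent i _).eq, sub_self, zero_add] at hleft
  have hright := hΛ (single i j a) (single j j 1)
  rw [single_mul_single_same, mul_one, single_mul_single_of_ne (h := hij.symm), sub_zero,
    (hcent j _).eq, sub_self, add_zero] at hright
  ext p q
  rcases eq_or_ne p i with rfl | hpi
  · rcases eq_or_ne q j with rfl | hqj
    · simp
    · rw [single_apply_of_col_ne _ _ (Ne.symm hqj)]
      simpa [hqj, hij] using congr($hright p q)
  rw [single_apply_of_row_ne (Ne.symm hpi)]
  rcases eq_or_ne q i with rfl | hqi
  · have h := congr($hleft p q)
    simp [hpi] at h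
    exact h2 _ (eq_neg_iff_add_eq_zero.mp h)
  · simpa [hpi, hqi] using congr($hleft p q)

theorem apply_single_diag_apply_mul_comm {i p q : ι} (hpi : p ≠ i) (hqi : q ≠ i) (hpq : p ≠ q)
    (a b : A) : Λ (single i i a) p p * b = b * Λ (single i i a) q q := by
  have h := congr($(hΛ (single i i a) (single p q b)) p q)
  rw [apply_single_of_ne hΛ hcent h2 hpq b] at h
  simp [hqi, hpi.symm] at h
  exact sub_eq_zero.mp h.symm

theorem apply_single_diag_apply_eq {i p q : ι} (hpi : p ≠ i) (hqi : q ≠ i) (a : A) :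
    Λ (single i i a) p p = Λ (single i i a) q q := by
  rcases eq_or_ne p q with rfl | hpq
  · rfl
  · simpa using apply_single_diag_apply_mul_comm hΛ hcent h2 hpi hqi hpq a 1

theorem commute_apply_single_diag_apply (h3 : 2 < Fintype.card ι) {i p : ι} (hpi : p ≠ i)
    (a b : A) : Commute (Λ (single i i a) p p) b := by
  obtain ⟨q, hqi, hqp⟩ := exists_ne_ne_of_two_lt_card h3 i p
  have h := apply_single_diag_apply_mul_comm hΛ hcent h2 hpi hqi (Ne.symm hqp) a b
  rwa [← apply_single_diag_apply_eq hΛ hcent h2 hpi hqi] at h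

theorem apply_single_diag_sub_apply_single_diag {i j : ι} (hij : i ≠ j) (a b : A) :
    Λ (single i i (a * b)) - Λ (single j j (b * a)) =
      single i i (Λ (single i j a) i j * b + a * Λ (single j i b) j i) -
        single j j (b * Λ (single i j a) i j + Λ (single j i b) j i * a) := by
  have h := hΛ (single i j a) (single j i b)
  rw [apply_single_of_ne hΛ hcent h2 hij, apply_single_of_ne hΛ hcent h2 hij.symm] at h
  simp only [single_mul_single_same, map_sub] at h
  rw [h, single_add, single_add]
  abel

theorem apply_single_diag_apply_eq_of_ne {i j k : ι} (hij : i ≠ j) (hki : k ≠ i) (hkj : k ≠ j)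
    (a b : A) : Λ (single i i (a * b)) k k = Λ (single j j (b * a)) k k := by
  have h := congr($(apply_single_diag_sub_apply_single_diag hΛ hcent h2 hij a b) k k)
  simp [hki.symm, hkj.symm] at h
  exact sub_eq_zero.mp h

theorem apply_single_apply_mul_of_ne {i j k : ι} (hij : i ≠ j) (hjk : j ≠ k) (hik : i ≠ k)
    (a b : A) : Λ (single i k (a * b)) i k =
      Λ (single i j a) i j * b + a * Λ (single j k b) j k := by
  have h := congr($(hΛ (single i j a) (single j k b)) i k)
  rw [apply_single_of_ne hΛ hcent h2 hij a, apply_single_of_ne hΛ hcent h2 hjk b] at h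
  simpa [hik, hik.symm] using h

end Structure

section ScalarTrace

variable {R A ι : Type*} [CommRing R] [Ring A] [Algebra R A] [Fintype ι]

theorem map_trace_mul_comm {F M : Type*} [AddCommMonoid M] [FunLike F A M]
    [AddMonoidHomClass F A M] {f : F} (hf : ∀ a b, f (a * b) = f (b * a)) (x y : Matrix ι ι A) :
    f (trace (x * y)) = f (trace (y * x)) := by
  simp only [trace, diag, mul_apply, map_sum, hf (x _ _)]
  exact Finset.sum_comm

variable [DecidableEq ι]

def scalarTrace (ζ : A →ₗ[R] A) : Matrix ι ι A →ₗ[R] Matrix ι ι A :=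
  diagonalLinearMap ι R A ∘ₗ LinearMap.pi fun _ => ζ ∘ₗ traceLinearMap ι R A

theorem scalarTrace_apply (ζ : A →ₗ[R] A) (x : Matrix ι ι A) :
    scalarTrace ζ x = scalar ι (ζ (trace x)) := rfl

theorem commute_scalarTrace {ζ : A →ₗ[R] A} (hζ : ∀ a b, Commute (ζ a) b) (x y : Matrix ι ι A) :
    Commute (scalarTrace ζ x) y :=
  scalar_commute _ (hζ _) y

theorem scalarTrace_mul_sub_mul {ζ : A →ₗ[R] A} (hζ : ∀ a b, ζ (a * b) = ζ (b * a))
    (x y : Matrix ι ι A) : scalarTrace ζ (x * y - y * x) = 0 := by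
  rw [scalarTrace_apply, trace_sub, map_sub, map_trace_mul_comm hζ, sub_self, map_zero]

end ScalarTrace

section NormalForm

variable {R A ι : Type*} [CommRing R] [Ring A] [Algebra R A] [DecidableEq ι]

variable (Λ : Matrix ι ι A →ₗ[R] Matrix ι ι A) (i₀ j₀ : ι)

def centralPart : A →ₗ[R] A := entryLinearMap R A j₀ j₀ ∘ₗ Λ ∘ₗ singleLinearMap R i₀ i₀

def cornerDerivation : A →ₗ[R] A :=
  entryLinearMap R A i₀ i₀ ∘ₗ Λ ∘ₗ singleLinearMap R i₀ i₀ - centralPart Λ i₀ j₀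

def diagonalCorrection (i : ι) : A := if i = i₀ then 0 else Λ (single i i₀ 1) i i₀

theorem centralPart_apply (a : A) : centralPart Λ i₀ j₀ a = Λ (single i₀ i₀ a) j₀ j₀ := rfl

theorem cornerDerivation_apply (a : A) :
    cornerDerivation Λ i₀ j₀ a = Λ (single i₀ i₀ a) i₀ i₀ - centralPart Λ i₀ j₀ a := rfl

variable [Fintype ι] {Λ i₀ j₀} (hΛ : IsLieDerivation Λ)
  (hcent : ∀ i x, Commute (Λ (single i i 1)) x)
  (h2 : ∀ a : A, a + a = 0 → a = 0) (h3 : 2 < Fintype.card ι) (h0 : i₀ ≠ j₀)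
include hΛ hcent h2 h3 h0

theorem apply_single_diag_apply_of_ne_eq_centralPart {i q : ι} (hqi : q ≠ i) (a : A) :
    Λ (single i i a) q q = centralPart Λ i₀ j₀ a := by
  rw [centralPart_apply]
  rcases eq_or_ne i i₀ with rfl | hi
  · exact apply_single_diag_apply_eq hΛ hcent h2 hqi h0.symm a
  obtain ⟨k, hki, hk₀⟩ := exists_ne_ne_of_two_lt_card h3 i i₀
  have hswap := apply_single_diag_apply_eq_of_ne hΛ hcent h2 hi hki hk₀ a 1
  rw [mul_one, one_mul] at hswap
  rw [apply_single_diag_apply_eq hΛ hcent h2 hqi hki, hswap,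
    apply_single_diag_apply_eq hΛ hcent h2 hk₀ h0.symm]

theorem commute_centralPart (a b : A) : Commute (centralPart Λ i₀ j₀ a) b :=
  commute_apply_single_diag_apply hΛ hcent h2 h3 h0.symm a b

theorem centralPart_mul_comm (a b : A) :
    centralPart Λ i₀ j₀ (a * b) = centralPart Λ i₀ j₀ (b * a) := by
  obtain ⟨k, hki, hkj⟩ := exists_ne_ne_of_two_lt_card h3 i₀ j₀
  rw [← apply_single_diag_apply_of_ne_eq_centralPart hΛ hcent h2 h3 h0 hki,
    ← apply_single_diag_apply_of_ne_eq_centralPart hΛ hcent h2 h3 h0 hkj]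
  exact apply_single_diag_apply_eq_of_ne hΛ hcent h2 h0 hki hkj a b

theorem apply_single_apply_mul_left {i j : ι} (hij : i ≠ j) (a b : A) :
    Λ (single i j (a * b)) i j =
      (Λ (single i i a) i i - centralPart Λ i₀ j₀ a) * b + a * Λ (single i j b) i j := by
  have h := congr($(hΛ (single i i a) (single i j b)) i j)
  rw [apply_single_of_ne hΛ hcent h2 hij b] at h
  simp [hij.symm] at h
  rw [h, apply_single_diag_apply_of_ne_eq_centralPart hΛ hcent h2 h3 h0 hij.symm,
    ← (commute_centralPart hΛ hcent h2 h3 h0 a b).eq, sub_mul]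

theorem apply_single_apply_mul_right {i j : ι} (hij : i ≠ j) (a b : A) :
    Λ (single i j (a * b)) i j =
      Λ (single i j a) i j * b + a * (Λ (single j j b) j j - centralPart Λ i₀ j₀ b) := by
  have h := congr($(hΛ (single i j a) (single j j b)) i j)
  rw [apply_single_of_ne hΛ hcent h2 hij a] at h
  simp [hij.symm] at h
  rw [h, apply_single_diag_apply_of_ne_eq_centralPart hΛ hcent h2 h3 h0 hij,
    (commute_centralPart hΛ hcent h2 h3 h0 b a).eq, mul_sub]

theorem apply_single_diag_apply_sub_centralPart {i j : ι} (hij : i ≠ j) (a b : A) :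
    Λ (single i i (a * b)) i i - centralPart Λ i₀ j₀ (a * b) =
      Λ (single i j a) i j * b + a * Λ (single j i b) j i := by
  rw [centralPart_mul_comm hΛ hcent h2 h3 h0,
    ← apply_single_diag_apply_of_ne_eq_centralPart hΛ hcent h2 h3 h0 hij]
  simpa [single_apply_of_row_ne hij.symm] using
    congr($(apply_single_diag_sub_apply_single_diag hΛ hcent h2 hij a b) i i)

theorem cornerDerivation_one : cornerDerivation Λ i₀ j₀ 1 = 0 := by
  have h := apply_single_apply_mul_left hΛ hcent h2 h3 h0 h0 (1 : A) 1
  rw [one_mul, one_mul, mul_one] at h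
  simpa [cornerDerivation_apply] using h

theorem apply_single_diag_apply_self (i : ι) (a : A) :
    Λ (single i i a) i i = cornerDerivation Λ i₀ j₀ a +
      (diagonalCorrection Λ i₀ i * a - a * diagonalCorrection Λ i₀ i) + centralPart Λ i₀ j₀ a := by
  rcases eq_or_ne i i₀ with rfl | hi
  · simp [diagonalCorrection, cornerDerivation_apply]
  have hleft := apply_single_apply_mul_left hΛ hcent h2 h3 h0 hi a 1
  have hright := apply_single_apply_mul_right hΛ hcent h2 h3 h0 hi 1 a
  rw [mul_one, mul_one] at hleft
  rw [one_mul, one_mul] at hright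
  rw [diagonalCorrection, if_neg hi, cornerDerivation_apply, ← sub_eq_zero,
    ← sub_eq_zero.mpr (hleft.symm.trans hright)]
  abel

theorem apply_single_one_apply_eq_neg {i j : ι} (hij : i ≠ j) :
    Λ (single i j 1) i j = -Λ (single j i 1) j i := by
  have h := apply_single_diag_apply_sub_centralPart hΛ hcent h2 h3 h0 hij (1 : A) 1
  rw [mul_one, mul_one, one_mul, apply_single_diag_apply_self hΛ hcent h2 h3 h0,
    cornerDerivation_one hΛ hcent h2 h3 h0] at h
  exact eq_neg_of_add_eq_zero_left (by simpa using h.symm)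

theorem apply_single_one_apply_of_ne {i j : ι} (hij : i ≠ j) :
    Λ (single i j 1) i j = diagonalCorrection Λ i₀ i - diagonalCorrection Λ i₀ j := by
  rcases eq_or_ne i i₀ with rfl | hi
  · simp [diagonalCorrection, hij.symm, apply_single_one_apply_eq_neg hΛ hcent h2 h3 h0 hij]
  rcases eq_or_ne j i₀ with rfl | hj
  · simp [diagonalCorrection, hi]
  have hcocycle := apply_single_apply_mul_of_ne hΛ hcent h2 hi (Ne.symm hj) hij (1 : A) 1
  rw [mul_one, mul_one, one_mul,
    apply_single_one_apply_eq_neg hΛ hcent h2 h3 h0 (Ne.symm hj)] at hcocycle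
  simp [diagonalCorrection, hi, hj, hcocycle, sub_eq_add_neg]

theorem apply_single_apply_of_ne {i j : ι} (hij : i ≠ j) (a : A) :
    Λ (single i j a) i j = cornerDerivation Λ i₀ j₀ a +
      (diagonalCorrection Λ i₀ i * a - a * diagonalCorrection Λ i₀ j) := by
  have h := apply_single_apply_mul_left hΛ hcent h2 h3 h0 hij a 1
  rw [mul_one, mul_one, apply_single_diag_apply_self hΛ hcent h2 h3 h0,
    apply_single_one_apply_of_ne hΛ hcent h2 h3 h0 hij] at h
  rw [h]
  noncomm_ring

theorem isDerivation_cornerDerivation : IsDerivation (cornerDerivation Λ i₀ j₀) := fun a b => by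
  have h := apply_single_diag_apply_sub_centralPart hΛ hcent h2 h3 h0 h0 a b
  rw [apply_single_apply_of_ne hΛ hcent h2 h3 h0 h0,
    apply_single_apply_of_ne hΛ hcent h2 h3 h0 h0.symm] at h
  rw [cornerDerivation_apply, h, show diagonalCorrection Λ i₀ i₀ = 0 from if_pos rfl]
  simp only [zero_mul, mul_zero, zero_sub, sub_zero, add_mul, mul_add, neg_mul, mul_assoc]
  abel

theorem eq_ad_add_mapMatrix_add_scalarTrace :
    Λ = ad R (diagonal (diagonalCorrection Λ i₀)) + (cornerDerivation Λ i₀ j₀).mapMatrix +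
      scalarTrace (centralPart Λ i₀ j₀) := by
  refine ext_linearMap (R := R) fun i j => LinearMap.ext fun a => ?_
  simp only [LinearMap.comp_apply, singleLinearMap_apply, LinearMap.add_apply, ad_apply,
    LinearMap.mapMatrix_apply, scalarTrace_apply]
  rcases eq_or_ne i j with rfl | hij
  · rw [trace_single_eq_same]
    ext p q
    simp only [Matrix.sub_apply, Matrix.add_apply, diagonal_mul, mul_diagonal, map_apply,
      single_apply, scalar_apply, diagonal_apply]
    rcases eq_or_ne p q with rfl | hpq
    · rcases eq_or_ne i p with rfl | hpi
      · simp [apply_single_diag_apply_self hΛ hcent h2 h3 h0, add_comm]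
      · simp [apply_single_diag_apply_of_ne_eq_centralPart hΛ hcent h2 h3 h0 (Ne.symm hpi), hpi]
    · have hne : ¬(i = p ∧ i = q) := fun h => hpq (h.1.symm.trans h.2)
      simp [apply_single_diag_apply_of_ne hΛ hcent i a hpq, hpq, hne]
  · rw [trace_single_eq_of_ne (h := hij), map_zero, map_zero, add_zero,
      apply_single_of_ne hΛ hcent h2 hij, apply_single_apply_of_ne hΛ hcent h2 h3 h0 hij]
    ext p q
    simp only [Matrix.sub_apply, Matrix.add_apply, diagonal_mul, mul_diagonal, map_apply,
      single_apply]
    split_ifs with h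
    · obtain ⟨rfl, rfl⟩ := h
      abel
    · simp

end NormalForm

theorem IsLieDerivation.exists_eq_isDerivation_add_central {R A ι : Type*} [CommRing R] [Ring A]
    [Algebra R A] [Fintype ι] [DecidableEq ι] {L : Matrix ι ι A →ₗ[R] Matrix ι ι A}
    (hL : IsLieDerivation L) (h2 : ∀ a : A, a + a = 0 → a = 0) (h3 : 2 < Fintype.card ι) :
    ∃ D τ : Matrix ι ι A →ₗ[R] Matrix ι ι A, IsDerivation D ∧ (∀ x y, Commute (τ x) y) ∧
      (∀ x y, τ (x * y - y * x) = 0) ∧ L = D + τ := by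
  obtain ⟨i₀, j₀, -, h0, -, -⟩ := Fintype.two_lt_card_iff.mp h3
  have : Nontrivial ι := ⟨⟨i₀, j₀, h0⟩⟩
  obtain ⟨T, hΛ, hcent⟩ := hL.exists_commute_add_ad
  set Λ := L + ad R T with hΛ_def
  have hdecomp := eq_ad_add_mapMatrix_add_scalarTrace hΛ hcent h2 h3 h0
  refine ⟨ad R (diagonal (diagonalCorrection Λ i₀) - T) + (cornerDerivation Λ i₀ j₀).mapMatrix,
    scalarTrace (centralPart Λ i₀ j₀),
    (isDerivation_ad _).add (isDerivation_cornerDerivation hΛ hcent h2 h3 h0).mapMatrix,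
    commute_scalarTrace (commute_centralPart hΛ hcent h2 h3 h0),
    scalarTrace_mul_sub_mul (centralPart_mul_comm hΛ hcent h2 h3 h0), LinearMap.ext fun x => ?_⟩
  have hx := congr($hdecomp x)
  simp only [hΛ_def, LinearMap.add_apply, ad_apply] at hx ⊢
  rw [sub_mul, mul_sub, ← sub_eq_zero, ← sub_eq_zero.mpr hx]
  abel

end MatrixLieDerivation

open MatrixLieDerivation

/-- for a 2-torsion free unital `R`-algebra `A` and `n ≥ 3`, the full
matrix algebra `Mₙ(A)` has the Lie derivation property. -/
theorem stmt_13 (R : Type*) [CommRing R] (A : Type*) [Ring A] [Algebra R A]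
    (h2 : ∀ a : A, a + a = 0 → a = 0) (n : ℕ) (hn : 3 ≤ n)
    (L : Matrix (Fin n) (Fin n) A →ₗ[R] Matrix (Fin n) (Fin n) A)
    (hL : ∀ x y : Matrix (Fin n) (Fin n) A,
      L (x * y - y * x) = L x * y - y * L x + (x * L y - L y * x)) :
    ∃ D τ : Matrix (Fin n) (Fin n) A →ₗ[R] Matrix (Fin n) (Fin n) A,
      (∀ x y : Matrix (Fin n) (Fin n) A, D (x * y) = D x * y + x * D y) ∧
      (∀ x y : Matrix (Fin n) (Fin n) A, τ x * y = y * τ x) ∧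
      (∀ x y : Matrix (Fin n) (Fin n) A, τ (x * y - y * x) = 0) ∧
      L = D + τ :=
  IsLieDerivation.exists_eq_isDerivation_add_central hL h2 (by rwa [Fintype.card_fin])
end

section
/- Let P : A → A, hA : A → B and F : M → M be R-linear maps such that P([a,a']) = [P(a),a'] + [a,P(a')] for all a, a' ∈ A and F(am) = P(a)m − m·hA(a) + a·F(m) for all a ∈ A, m ∈ M. Then m·hA([a,a']) = 0 for all m ∈ M and all a, a' ∈ A; consequently, if M is faithful as a right B-module (Mb = 0 implies b = 0 for b ∈ B), then hA([a,a']) = 0 for all a, a' ∈ A. -/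
lemma cA_left {G : Type*} [Ring G] {e a : G} (he : e * e = e) (h : cA e a) :
    e * a = a := by
  conv_lhs => rw [← h]
  rw [← mul_assoc, ← mul_assoc, he]
  exact h

lemma cA_right {G : Type*} [Ring G] {e a : G} (he : e * e = e) (h : cA e a) :
    a * e = a := by
  conv_lhs => rw [← h]
  rw [mul_assoc, he]
  exact h

lemma cA_mul {G : Type*} [Ring G] {e a a' : G} (he : e * e = e)
    (h : cA e a) (h' : cA e a') : cA e (a * a') := by
  unfold cA
  rw [← mul_assoc, cA_left he h, mul_assoc, cA_right he h']

lemma cA_sub {G : Type*} [Ring G] {e a a' : G}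
    (h : cA e a) (h' : cA e a') : cA e (a - a') := by
  unfold cA at *
  rw [mul_sub, sub_mul, h, h']

lemma cM_of_cA_mul {G : Type*} [Ring G] {e a m : G} (he : e * e = e)
    (h : cA e a) (hm : cM e m) : cM e (a * m) := by
  have hf : (1 - e) * (1 - e) = (1 : G) - e := by
    simp [mul_sub, sub_mul, he]
  have hm' : m * (1 - e) = m := by
    conv_lhs => rw [← hm]
    rw [mul_assoc, mul_assoc, hf, ← mul_assoc]
    exact hm
  unfold cM
  rw [← mul_assoc, cA_left he h, mul_assoc, hm']

/-- Remark 2.3(i): if `P : A → A` is a Lie derivation, `hA : A → B` and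
`F : M → M` are `R`-linear with `F(am) = P(a)m - m·hA(a) + a·F(m)`, then
`m·hA([a,a']) = 0`; hence `hA` vanishes at commutators when `M` is right-faithful. -/
theorem stmt_15
    {R : Type*} [CommRing R] {G : Type*} [Ring G] [Algebra R G]
    (e : G) (he : e * e = e) (he0 : e ≠ 0) (he1 : e ≠ 1)
    (P hA F : G →ₗ[R] G)
    (hPmem : ∀ a : G, cA e a → cA e (P a))
    (hAmem : ∀ a : G, cA e a → cB e (hA a))
    (hFmem : ∀ m : G, cM e m → cM e (F m))
    (hPlie : ∀ a a' : G, cA e a → cA e a' →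
      P (a * a' - a' * a) = P a * a' - a' * P a + (a * P a' - P a' * a))
    (hFc : ∀ a m : G, cA e a → cM e m → F (a * m) = P a * m - m * hA a + a * F m) :
    (∀ m a a' : G, cM e m → cA e a → cA e a' → m * hA (a * a' - a' * a) = 0) ∧
    ((∀ b : G, cB e b → (∀ m : G, cM e m → m * b = 0) → b = 0) →
      ∀ a a' : G, cA e a → cA e a' → hA (a * a' - a' * a) = 0) := by
  have key : ∀ m a a' : G, cM e m → cA e a → cA e a' →
      m * hA (a * a' - a' * a) = 0 := by
    intro m a a' hm ha ha'
    have hcomm : cA e (a * a' - a' * a) := cA_sub (cA_mul he ha ha') (cA_mul he ha' ha)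
    have h5 := hFc (a * a' - a' * a) m hcomm hm
    have h1 := hFc a (a' * m) ha (cM_of_cA_mul he ha' hm)
    have h2 := hFc a' m ha' hm
    have h3 := hFc a' (a * m) ha' (cM_of_cA_mul he ha hm)
    have h4 := hFc a m ha hm
    have hsplit : F ((a * a' - a' * a) * m) = F (a * (a' * m)) - F (a' * (a * m)) := by
      rw [← map_sub]
      congr 1
      noncomm_ring
    have h7 : m * hA (a * a' - a' * a) =
        (P (a * a' - a' * a) * m + (a * a' - a' * a) * F m) -
          F ((a * a' - a' * a) * m) := by
      rw [h5]; noncomm_ring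
    rw [h7, hsplit, h1, h3, h2, h4, hPlie a a' ha ha']
    noncomm_ring
  refine ⟨key, ?_⟩
  intro hfaith a a' ha ha'
  exact hfaith _ (hAmem _ (cA_sub (cA_mul he ha ha') (cA_mul he ha' ha)))
    (fun m hm => key m a a' hm ha ha')
end

section
/- Let L be a Lie derivation of G, and define P : A → A by P(a) = eL(a)e and hA : A → B by hA(a) = fL(a)f. Suppose ℓA : A → A is an R-linear map such that ℓA(a)·m = m·hA(a) for all a ∈ A and m ∈ M, and suppose M is faithful as a left A-module (aM = 0 implies a = 0 for a ∈ A). Then P − ℓA is a derivation of A: (P − ℓA)(aa') = (P − ℓA)(a)·a' + a·(P − ℓA)(a') for all a, a' ∈ A. -/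
section Peirce

variable {G : Type*} [Ring G] {e a a' m : G}

theorem cA_iff (he : IsIdempotentElem e) : cA e a ↔ e * a = a ∧ a * e = a := by
  refine ⟨fun ha => ⟨?_, ?_⟩, fun ⟨hl, hr⟩ => by rw [cA, hl, hr]⟩
  · rw [← ha, ← mul_assoc, ← mul_assoc, he.eq]
  · rw [← ha, mul_assoc, he.eq]

theorem cA.idem_mul (he : IsIdempotentElem e) (ha : cA e a) : e * a = a :=
  ((cA_iff he).1 ha).1

theorem cA.mul_idem (he : IsIdempotentElem e) (ha : cA e a) : a * e = a :=
  ((cA_iff he).1 ha).2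

theorem cA.mul_compl (he : IsIdempotentElem e) (ha : cA e a) : a * (1 - e) = 0 := by
  rw [mul_sub, mul_one, ha.mul_idem he, sub_self]

theorem cA_corner (he : IsIdempotentElem e) (x : G) : cA e (e * x * e) :=
  (cA_iff he).2 ⟨by rw [← mul_assoc, ← mul_assoc, he.eq], by rw [mul_assoc, he.eq]⟩

theorem cA.sub (he : IsIdempotentElem e) (ha : cA e a) (ha' : cA e a') : cA e (a - a') := by
  rw [cA_iff he, mul_sub, sub_mul, ha.idem_mul he, ha'.idem_mul he, ha.mul_idem he,
    ha'.mul_idem he]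
  exact ⟨rfl, rfl⟩

theorem cA.add (he : IsIdempotentElem e) (ha : cA e a) (ha' : cA e a') : cA e (a + a') := by
  rw [cA_iff he, mul_add, add_mul, ha.idem_mul he, ha'.idem_mul he, ha.mul_idem he,
    ha'.mul_idem he]
  exact ⟨rfl, rfl⟩

theorem cA.mul (he : IsIdempotentElem e) (ha : cA e a) (ha' : cA e a') : cA e (a * a') := by
  rw [cA_iff he, ← mul_assoc, ha.idem_mul he, mul_assoc, ha'.mul_idem he]
  exact ⟨rfl, rfl⟩

theorem cM.idem_mul (he : IsIdempotentElem e) (hm : cM e m) : e * m = m := by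
  rw [← hm, ← mul_assoc, ← mul_assoc, he.eq]

theorem cM.mul_compl (he : IsIdempotentElem e) (hm : cM e m) : m * (1 - e) = m := by
  conv_lhs => rw [← hm]
  rw [mul_assoc, he.one_sub.eq, hm]

theorem cM.mul_idem (he : IsIdempotentElem e) (hm : cM e m) : m * e = 0 := by
  rw [← hm, mul_assoc, he.one_sub_mul_self, mul_zero]

theorem cM.cA_mul (he : IsIdempotentElem e) (ha : cA e a) (hm : cM e m) : cM e (a * m) := by
  rw [cM, ← mul_assoc, ha.idem_mul he, mul_assoc, hm.mul_compl he]

theorem cM.mul_cA (he : IsIdempotentElem e) (ha : cA e a) (hm : cM e m) : m * a = 0 := by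
  rw [← ha.idem_mul he, ← mul_assoc, hm.mul_idem he, zero_mul]

theorem cA_leibniz_of_faithful (he : IsIdempotentElem e)
    (hfaith : ∀ a : G, cA e a → (∀ m : G, cM e m → a * m = 0) → a = 0)
    (D δ : G → G) (hD : ∀ a, cA e a → cA e (D a))
    (hδ : ∀ a m, cA e a → cM e m → δ (a * m) = D a * m + a * δ m)
    (ha : cA e a) (ha' : cA e a') :
    D (a * a') = D a * a' + a * D a' := by
  have h_mem : cA e (D (a * a') - (D a * a' + a * D a')) :=
    (hD _ (ha.mul he ha')).sub he (((hD a ha).mul he ha').add he (ha.mul he (hD a' ha')))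
  rw [← sub_eq_zero]
  refine hfaith _ h_mem fun m hm => ?_
  have h_assoc := hδ (a * a') m (ha.mul he ha') hm
  have h_outer := hδ a (a' * m) ha (hm.cA_mul he ha')
  have h_inner := hδ a' m ha' hm
  rw [← mul_assoc] at h_outer
  linear_combination (norm := noncomm_ring) h_outer - h_assoc + a * h_inner

theorem lie_derivation_mul_cM_corner (he : IsIdempotentElem e) (L : G → G)
    (hL : ∀ x y : G, L (x * y - y * x) = L x * y - y * L x + (x * L y - L y * x))
    (ha : cA e a) (hm : cM e m) :
    e * L (a * m) * (1 - e) =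
      e * L a * e * m - m * ((1 - e) * L a * (1 - e)) + a * (e * L m * (1 - e)) := by
  have h := hL a m
  rw [hm.mul_cA he ha, sub_zero] at h
  linear_combination (norm := noncomm_ring) e * h * (1 - e)
    + e * L a * hm.mul_compl he - e * L a * hm.idem_mul he
    + (hm.mul_compl he - hm.idem_mul he) * (L a * (1 - e))
    + (ha.idem_mul he - ha.mul_idem he) * (L m * (1 - e)) - e * L m * ha.mul_compl he

end Peirce

theorem stmt_17_general
    {R : Type*} [CommRing R] {G : Type*} [Ring G] [Algebra R G]
    (e : G) (he : e * e = e)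
    (L : G →ₗ[R] G)
    (hL : ∀ x y : G, L (x * y - y * x) = L x * y - y * L x + (x * L y - L y * x))
    (ℓA : G →ₗ[R] G)
    (hmem : ∀ a : G, cA e a → cA e (ℓA a))
    (hcomm : ∀ a m : G, cA e a → cM e m → ℓA a * m = m * ((1 - e) * L a * (1 - e)))
    (hfaith : ∀ a : G, cA e a → (∀ m : G, cM e m → a * m = 0) → a = 0) :
    ∀ a a' : G, cA e a → cA e a' →
      e * L (a * a') * e - ℓA (a * a') =
        (e * L a * e - ℓA a) * a' + a * (e * L a' * e - ℓA a') := by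
  intro a a' ha ha'
  refine cA_leibniz_of_faithful he hfaith (fun a => e * L a * e - ℓA a)
    (fun m => e * L m * (1 - e)) (fun a ha => (cA_corner he _).sub he (hmem a ha)) ?_ ha ha'
  intro a m ha hm
  linear_combination (norm := noncomm_ring)
    lie_derivation_mul_cM_corner he L hL ha hm + hcomm a m ha hm

/-- Remark 2.3(iii): if `L` is a Lie derivation of `G`, `ℓA : A → A` is
`R`-linear with `ℓA(a)·m = m·hA(a)` for all `a ∈ A`, `m ∈ M`, and `M` is a faithful left
`A`-module, then `P - ℓA` is a derivation of `A`, where `P a = eL(a)e`, `hA a = fL(a)f`. -/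
theorem stmt_17
    {R : Type*} [CommRing R] {G : Type*} [Ring G] [Algebra R G]
    (e : G) (he : e * e = e) (he0 : e ≠ 0) (he1 : e ≠ 1)
    (hM2 : ∀ x : G, cM e x → x + x = 0 → x = 0)
    (hN2 : ∀ x : G, cN e x → x + x = 0 → x = 0)
    (L : G →ₗ[R] G)
    (hL : ∀ x y : G, L (x * y - y * x) = L x * y - y * L x + (x * L y - L y * x))
    (ℓA : G →ₗ[R] G)
    (hmem : ∀ a : G, cA e a → cA e (ℓA a))
    (hcomm : ∀ a m : G, cA e a → cM e m → ℓA a * m = m * ((1 - e) * L a * (1 - e)))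
    (hfaith : ∀ a : G, cA e a → (∀ m : G, cM e m → a * m = 0) → a = 0) :
    ∀ a a' : G, cA e a → cA e a' →
      e * L (a * a') * e - ℓA (a * a') =
        (e * L a * e - ℓA a) * a' + a * (e * L a' * e - ℓA a') :=
  stmt_17_general e he L hL ℓA hmem hcomm hfaith
end

section
/- Let L be a Lie derivation of G. Then for all m ∈ M and n ∈ N, (eL(nm)e)·m = m·(fL(mn)f); that is, hB(nm)·m = m·hA(mn), where hA(a) = fL(a)f for a ∈ A and hB(b) = eL(b)e for b ∈ B. -/
/-- equation (3.3): for a Lie derivation `L` of `G`,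
`hB(nm)·m = m·hA(mn)` for all `m ∈ M`, `n ∈ N`, where `hA a = fL(a)f`, `hB b = eL(b)e`. -/
theorem stmt_18
    {R : Type*} [CommRing R] {G : Type*} [Ring G] [Algebra R G]
    (e : G) (he : e * e = e) (he0 : e ≠ 0) (he1 : e ≠ 1)
    (hM2 : ∀ x : G, cM e x → x + x = 0 → x = 0)
    (hN2 : ∀ x : G, cN e x → x + x = 0 → x = 0)
    (L : G →ₗ[R] G)
    (hL : ∀ x y : G, L (x * y - y * x) = L x * y - y * L x + (x * L y - L y * x)) :
    ∀ m n : G, cM e m → cN e n →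
      (e * L (n * m) * e) * m = m * ((1 - e) * L (m * n) * (1 - e)) := by
  intro m n hm hn
  have hm' : e * m * (1 - e) = m := hm
  have hn' : (1 - e) * n * e = n := hn
  have h1e : (1 - e) * e = 0 := by rw [sub_mul, one_mul, he, sub_self]
  have he1 : e * (1 - e) = 0 := by rw [mul_sub, mul_one, he, sub_self]
  have hem : e * m = m := by
    conv_lhs => rw [← hm']
    rw [← mul_assoc, ← mul_assoc, he, hm']
  have hme : m * e = 0 := by
    conv_lhs => rw [← hm']
    rw [mul_assoc, h1e, mul_zero]
  have hne : n * e = n := by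
    conv_lhs => rw [← hn']
    rw [mul_assoc, he]
    exact hn'
  have hen : e * n = 0 := by
    conv_lhs => rw [← hn']
    rw [← mul_assoc, ← mul_assoc, he1, zero_mul, zero_mul]
  have hmm : m * m = 0 := by
    rw [← hem, mul_assoc, ← mul_assoc m e m, hme, zero_mul, mul_zero]
  have hnn : n * n = 0 := by
    rw [← hne, mul_assoc, ← mul_assoc e n e, hen, zero_mul, mul_zero]
  have eex : ∀ x : G, e * (e * x) = e * x := fun x => by rw [← mul_assoc, he]
  have emx : ∀ x : G, e * (m * x) = m * x := fun x => by rw [← mul_assoc, hem]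
  have mex : ∀ x : G, m * (e * x) = 0 := fun x => by rw [← mul_assoc, hme, zero_mul]
  have enx : ∀ x : G, e * (n * x) = 0 := fun x => by rw [← mul_assoc, hen, zero_mul]
  have nex : ∀ x : G, n * (e * x) = n * x := fun x => by rw [← mul_assoc, hne]
  have mmx : ∀ x : G, m * (m * x) = 0 := fun x => by rw [← mul_assoc, hmm, zero_mul]
  have nnx : ∀ x : G, n * (n * x) = 0 := fun x => by rw [← mul_assoc, hnn, zero_mul]
  -- the three Lie-derivation equations
  have h1 := hL (m * n) m
  rw [← mul_assoc m m n, hmm, zero_mul, sub_zero] at h1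
  have h2 := hL m (n * m)
  rw [mul_assoc n m m, hmm, mul_zero, sub_zero, ← mul_assoc m n m] at h2
  have H := h1.symm.trans h2
  have h3 := hL m n
  rw [map_sub] at h3
  have Hu : L (m * n) = L m * n - n * L m + (m * L n - L n * m) + L (n * m) :=
    sub_eq_iff_eq_add.mp h3
  rw [Hu] at H ⊢
  rw [← sub_eq_zero]
  refine hM2 _ ?_ ?_
  · show e * _ * (1 - e) = _
    simp only [mul_sub, sub_mul, mul_add, add_mul, mul_one, one_mul, mul_zero, zero_mul,
      mul_assoc, he, eex, hem, emx, hme, mex, hen, enx, hne, nex, hmm, mmx, hnn, nnx,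
      sub_zero, zero_sub, add_zero, zero_add, sub_self, neg_neg, neg_sub, mul_neg, neg_mul, sub_neg_eq_add, neg_zero]
  · have H2 := congrArg (fun t => e * t * (1 - e)) H
    beta_reduce at H2
    have H3 := sub_eq_zero_of_eq H2
    rw [← H3]
    simp only [mul_sub, sub_mul, mul_add, add_mul, mul_one, one_mul, mul_zero, zero_mul,
      mul_assoc, he, eex, hem, emx, hme, mex, hen, enx, hne, nex, hmm, mmx, hnn, nnx,
      sub_zero, zero_sub, add_zero, zero_add, sub_self, neg_neg, neg_sub, mul_neg, neg_mul, sub_neg_eq_add, neg_zero]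
    abel
end
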